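/- arXiv:1602.05557 — 10 statements merged into one kernel-verified Lean document; each statement's English description precedes it below -/
import Mathlib

section
/- Let d, n be positive integers with 2 ≤ n and d ≤ n, let H be a d-dimensional complex inner product space, and let φ_1, …, φ_n ∈ H all have the same norm √r for some r > 0. Then max_{i≠j} |⟨φ_i, φ_j⟩| / (‖φ_i‖·‖φ_j‖) ≥ √((n − d)/(d(n − 1))) (the Welch bound). -/
/-!
Write the Gram matrix of the `φ i` as `G = Aᴴ A`, where `A` is the `d × n` matrix of coordinates
in an orthonormal basis. The Frobenius norms of `G` and of the `d × d` frame operator `A Aᴴ` agree,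
as do their traces `n r`, so Cauchy–Schwarz on the `d` diagonal entries of `A Aᴴ` gives
`∑ i j, |⟪φ i, φ j⟫|² ≥ (n r)² / d`. The `n` diagonal terms contribute exactly `n r²`, so on
average over the `n (n - 1)` off-diagonal pairs `|⟪φ i, φ j⟫|² ≥ r² (n - d) / (d (n - 1))`.
-/

open Finset Matrix

namespace Matrix

variable {𝕜 m n : Type*} [RCLike 𝕜] [Fintype m] [Fintype n]

theorem IsHermitian.trace_mul_self {M : Matrix n n 𝕜} (hM : M.IsHermitian) :
    (M * M).trace = ((∑ i, ∑ j, ‖M i j‖ ^ 2 : ℝ) : 𝕜) := by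
  simp only [trace, diag_apply, mul_apply]
  push_cast
  refine sum_congr rfl fun i _ => sum_congr rfl fun j _ => ?_
  rw [← hM.apply j i, RCLike.star_def, RCLike.mul_conj]

theorem sq_re_trace_le_card_mul_sum_norm_sq (M : Matrix n n 𝕜) :
    (RCLike.re M.trace) ^ 2 ≤ Fintype.card n * ∑ i, ∑ j, ‖M i j‖ ^ 2 :=
  calc (RCLike.re M.trace) ^ 2 = (∑ i, RCLike.re (M i i)) ^ 2 := by
        rw [trace, map_sum]; rfl
    _ ≤ Fintype.card n * ∑ i, RCLike.re (M i i) ^ 2 := sq_sum_le_card_mul_sum_sq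
    _ ≤ Fintype.card n * ∑ i, ‖M i i‖ ^ 2 := by
        refine mul_le_mul_of_nonneg_left (sum_le_sum fun i _ => ?_) (by positivity)
        exact sq_le_sq.2 ((RCLike.abs_re_le_norm (M i i)).trans (le_abs_self _))
    _ ≤ Fintype.card n * ∑ i, ∑ j, ‖M i j‖ ^ 2 := by
        gcongr with i
        exact single_le_sum (f := fun j => ‖M i j‖ ^ 2) (fun _ _ => by positivity) (mem_univ i)

theorem sum_norm_sq_conjTranspose_mul_self (A : Matrix m n 𝕜) :
    ∑ i, ∑ j, ‖(Aᴴ * A) i j‖ ^ 2 = ∑ k, ∑ l, ‖(A * Aᴴ) k l‖ ^ 2 := by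
  have h := (isHermitian_conjTranspose_mul_self A).trace_mul_self
  have hcycle : (Aᴴ * A * (Aᴴ * A)).trace = (A * Aᴴ * (A * Aᴴ)).trace := by
    rw [Matrix.mul_assoc, trace_mul_comm]; simp only [Matrix.mul_assoc]
  rw [hcycle, (isHermitian_mul_conjTranspose_self A).trace_mul_self] at h
  exact_mod_cast h.symm

theorem sq_re_trace_conjTranspose_mul_self_le (A : Matrix m n 𝕜) :
    (RCLike.re (Aᴴ * A).trace) ^ 2 ≤ Fintype.card m * ∑ i, ∑ j, ‖(Aᴴ * A) i j‖ ^ 2 := by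
  rw [trace_mul_comm, sum_norm_sq_conjTranspose_mul_self]
  exact sq_re_trace_le_card_mul_sum_norm_sq _

end Matrix

theorem sq_sum_norm_sq_le_finrank_mul_sum_norm_inner_sq {𝕜 E ι : Type*} [RCLike 𝕜]
    [NormedAddCommGroup E] [InnerProductSpace 𝕜 E] [FiniteDimensional 𝕜 E] [Fintype ι]
    (v : ι → E) :
    (∑ i, ‖v i‖ ^ 2) ^ 2 ≤ Module.finrank 𝕜 E * ∑ i, ∑ j, ‖(inner 𝕜 (v i) (v j) : 𝕜)‖ ^ 2 := by
  have h := sq_re_trace_conjTranspose_mul_self_le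
    (of fun k i => (stdOrthonormalBasis 𝕜 E).repr (v i) k)
  rw [← gram_eq_conjTranspose_mul, Fintype.card_fin] at h
  simpa [trace, inner_self_eq_norm_sq] using h

theorem Fintype.exists_ne_le_of_mul_le_sum_sub_diag {ι : Type*} [Fintype ι] [Nontrivial ι]
    {f : ι → ι → ℝ} {c : ℝ}
    (h : Fintype.card ι * ((Fintype.card ι - 1) * c) ≤ ∑ i, ∑ j, f i j - ∑ i, f i i) :
    ∃ i j, i ≠ j ∧ c ≤ f i j := by
  classical
  by_contra! hlt
  have hrow : ∀ i, ∑ j, f i j - f i i < (Fintype.card ι - 1) * c := fun i =>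
    calc ∑ j, f i j - f i i = ∑ j ∈ univ.erase i, f i j := by
          rw [← add_sum_erase _ _ (mem_univ i), add_sub_cancel_left]
      _ < ∑ j ∈ univ.erase i, c := by
          refine sum_lt_sum_of_nonempty ?_ fun j hj => hlt i j (ne_of_mem_erase hj).symm
          obtain ⟨j, hj⟩ := exists_ne i
          exact ⟨j, mem_erase.2 ⟨hj, mem_univ j⟩⟩
      _ = (Fintype.card ι - 1) * c := by
          rw [sum_const, card_erase_of_mem (mem_univ i), card_univ, nsmul_eq_mul,
            Nat.cast_pred Fintype.card_pos]
  have htotal := sum_lt_sum_of_nonempty univ_nonempty fun i _ => hrow i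
  rw [sum_sub_distrib, sum_const, card_univ, nsmul_eq_mul] at htotal
  linarith

theorem welch_bound_general (d n : ℕ) (hd : 0 < d) (hn : 2 ≤ n)
    (H : Type*) [NormedAddCommGroup H] [InnerProductSpace ℂ H] [FiniteDimensional ℂ H]
    (hdim : Module.finrank ℂ H = d)
    (r : ℝ) (hr : 0 < r) (φ : Fin n → H) (hnorm : ∀ i, ‖φ i‖ = Real.sqrt r) :
    ∃ i j : Fin n, i ≠ j ∧
      Real.sqrt (((n : ℝ) - d) / (d * ((n : ℝ) - 1))) ≤
        ‖(inner ℂ (φ i) (φ j) : ℂ)‖ / (‖φ i‖ * ‖φ j‖) := by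
  have : Nontrivial (Fin n) := Fin.nontrivial_iff_two_le.2 hn
  have hsq : ∀ i, ‖φ i‖ ^ 2 = r := fun i => by rw [hnorm, Real.sq_sqrt hr.le]
  have hdiag : ∀ i, ‖(inner ℂ (φ i) (φ i) : ℂ)‖ ^ 2 = r ^ 2 := fun i => by
    rw [inner_self_eq_norm_sq_to_K, norm_pow, RCLike.norm_ofReal, abs_norm, hsq]
  have hpot := sq_sum_norm_sq_le_finrank_mul_sum_norm_inner_sq (𝕜 := ℂ) φ
  simp only [hsq, sum_const, card_univ, Fintype.card_fin, nsmul_eq_mul, hdim] at hpot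
  have hd' : (0 : ℝ) < d := Nat.cast_pos.2 hd
  have hn1 : (n : ℝ) - 1 ≠ 0 := by
    have : (2 : ℝ) ≤ n := by exact_mod_cast hn
    linarith
  obtain ⟨i, j, hij, hle⟩ := Fintype.exists_ne_le_of_mul_le_sum_sub_diag
    (f := fun i j => ‖(inner ℂ (φ i) (φ j) : ℂ)‖ ^ 2)
    (c := r ^ 2 * (((n : ℝ) - d) / (d * ((n : ℝ) - 1)))) (by
      simp only [hdiag, sum_const, card_univ, Fintype.card_fin, nsmul_eq_mul]
      calc _ = n * r ^ 2 * (n - d) / d := by field_simp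
        _ ≤ _ := by rw [div_le_iff₀ hd']; linarith)
  refine ⟨i, j, hij, ?_⟩
  rw [hnorm, hnorm, Real.mul_self_sqrt hr.le, Real.sqrt_le_left (by positivity), div_pow,
    le_div_iff₀ (by positivity)]
  linarith

/-- The Welch bound: `n` equal-norm vectors in a `d`-dimensional complex inner product
space have coherence at least `√((n − d)/(d(n − 1)))`. -/
theorem welch_bound (d n : ℕ) (hd : 0 < d) (hn : 2 ≤ n) (hdn : d ≤ n)
    (H : Type*) [NormedAddCommGroup H] [InnerProductSpace ℂ H] [FiniteDimensional ℂ H]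
    (hdim : Module.finrank ℂ H = d)
    (r : ℝ) (hr : 0 < r) (φ : Fin n → H) (hnorm : ∀ i, ‖φ i‖ = Real.sqrt r) :
    ∃ i j : Fin n, i ≠ j ∧
      Real.sqrt (((n : ℝ) - d) / (d * ((n : ℝ) - 1))) ≤
        ‖(inner ℂ (φ i) (φ j) : ℂ)‖ / (‖φ i‖ * ‖φ j‖) :=
  welch_bound_general d n hd hn H hdim r hr φ hnorm
end

section
/- Let Φ be an m×n complex matrix (n ≥ 2) whose columns φ_1, …, φ_n all lie in a d-dimensional subspace H of ℂ^m with 1 ≤ d ≤ n, and satisfy ‖φ_i‖² = r > 0 for all i. Then max_{i≠j} |⟨φ_i, φ_j⟩|/r = √((n − d)/(d(n − 1))) (equality in the Welch bound) if and only if the columns form an equiangular tight frame for H, i.e., ΦΦ* = (rn/d)·Π where Π is the orthogonal projection onto H, and there is w ≥ 0 with |⟨φ_i, φ_j⟩| = w for all i ≠ j. -/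
/-!
Write `G = Φᴴ * Φ` and `c = r n / d`. Expanding `‖Φ Φᴴ - c P‖²_F` with `P Φ = Φ`, `P² = P`,
`tr P = d`, `tr G = n r` and `Gᵢᵢ = r` gives the identity
`∑_{i ≠ j} |Gᵢⱼ|² = ‖Φ Φᴴ - c P‖²_F + n (n - 1) r² (n - d) / (d (n - 1))`.
The largest of the `n (n - 1)` numbers `|Gᵢⱼ|` is at least their root mean square, which by the
identity is at least `r √((n - d) / (d (n - 1)))`. So the Welch bound is attained exactly when
both inequalities are equalities: the Frobenius term vanishes (a tight frame, with constant `c`)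
and all the `|Gᵢⱼ|` coincide (equiangularity).
-/

open Matrix

theorem Finset.sum_sum_eq_sum_add_sum_offDiag {ι M : Type*} [DecidableEq ι] [AddCommMonoid M]
    (s : Finset ι) (f : ι → ι → M) :
    ∑ i ∈ s, ∑ j ∈ s, f i j = ∑ i ∈ s, f i i + ∑ p ∈ s.offDiag, f p.1 p.2 := by
  rw [← sum_product', ← diag_union_offDiag, sum_union (disjoint_diag_offDiag s), sum_diag]

open Finset in
theorem isGreatest_image_div_iff_of_sum_sq_eq {ι : Type*} {s : Finset ι} (hs : s.Nonempty)
    {f : ι → ℝ} (hf : ∀ x ∈ s, 0 ≤ f x) {r a F : ℝ} (hr : 0 < r) (ha : 0 ≤ a) (hF : 0 ≤ F)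
    (hsum : ∑ x ∈ s, f x ^ 2 = F + #s * (r * a) ^ 2) :
    IsGreatest ((fun x => f x / r) '' s) a ↔ F = 0 ∧ ∃ w, 0 ≤ w ∧ ∀ x ∈ s, f x = w := by
  have hsum' : ∑ x ∈ s, f x ^ 2 = F + ∑ _x ∈ s, (r * a) ^ 2 := by simpa using hsum
  constructor
  · intro h
    have hle : ∀ x ∈ s, f x ^ 2 ≤ (r * a) ^ 2 := fun x hx =>
      pow_le_pow_left₀ (hf x hx) ((div_le_iff₀' hr).1 (h.2 ⟨x, hx, rfl⟩)) 2
    have hF0 : F = 0 := le_antisymm (by linarith [sum_le_sum hle]) hF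
    rw [hF0, zero_add] at hsum'
    refine ⟨hF0, r * a, by positivity, fun x hx => ?_⟩
    exact (pow_left_inj₀ (hf x hx) (by positivity) two_ne_zero).1
      ((sum_eq_sum_iff_of_le hle).1 hsum' x hx)
  · rintro ⟨rfl, w, hw, hfw⟩
    have hw2 : w ^ 2 = (r * a) ^ 2 := by
      rw [zero_add, sum_congr rfl fun x hx => by rw [hfw x hx]] at hsum
      simpa [hs.card_pos.ne'] using hsum
    have hwa : w / r = a := by
      rw [(pow_left_inj₀ hw (by positivity) two_ne_zero).1 hw2, mul_div_cancel_left₀ _ hr.ne']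
    obtain ⟨x₀, hx₀⟩ := hs
    refine ⟨⟨x₀, hx₀, by simp only [hfw x₀ hx₀, hwa]⟩, ?_⟩
    rintro _ ⟨x, hx, rfl⟩
    simp only [hfw x hx, hwa, le_refl]

namespace Matrix

section Projection

variable {R m : Type*} [CommRing R] [Fintype m] [DecidableEq m] {H : Submodule R (m → R)}
  {P : Matrix m m R}

theorem mul_eq_self_of_isProj {n : Type*} (hP : LinearMap.IsProj H P.toLin')
    {Φ : Matrix m n R} (hΦ : ∀ j, Φ.col j ∈ H) : P * Φ = Φ := by
  ext i j
  simpa [mul_apply, mulVec, dotProduct] using congrFun (hP.map_id _ (hΦ j)) i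

theorem mul_self_eq_self_of_isProj (hP : LinearMap.IsProj H P.toLin') : P * P = P :=
  mul_eq_self_of_isProj hP fun j => by simpa [mulVec_single_one] using hP.map_mem (Pi.single j 1)

theorem trace_eq_finrank_of_isProj {K : Type*} [Field K] {H : Submodule K (m → K)}
    {P : Matrix m m K} (hP : LinearMap.IsProj H P.toLin') : P.trace = Module.finrank K H := by
  rw [← trace_toLin'_eq, hP.trace]

end Projection

section Frobenius

variable {𝕜 m n : Type*} [RCLike 𝕜] [Fintype m] [Fintype n]

theorem sum_sum_norm_sq_eq_zero_iff (A : Matrix m n 𝕜) :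
    ∑ i, ∑ j, ‖A i j‖ ^ 2 = 0 ↔ A = 0 := by
  rw [Finset.sum_eq_zero_iff_of_nonneg fun _ _ => by positivity, ← Matrix.ext_iff]
  simp [Finset.sum_eq_zero_iff_of_nonneg]

theorem sum_sum_norm_sq_eq_re_trace (A : Matrix m n 𝕜) :
    ∑ i, ∑ j, ‖A i j‖ ^ 2 = RCLike.re (A * Aᴴ).trace := by
  simp [trace, mul_apply, RCLike.mul_conj]

theorem sum_sum_norm_sq_mul_conjTranspose_sub_smul (Φ : Matrix m n 𝕜) {P : Matrix m m 𝕜}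
    (hPh : Pᴴ = P) (hPP : P * P = P) (hPΦ : P * Φ = Φ) (c : ℝ) :
    ∑ i, ∑ j, ‖(Φ * Φᴴ - (c : 𝕜) • P) i j‖ ^ 2 =
      ∑ i, ∑ j, ‖(Φᴴ * Φ) i j‖ ^ 2 - 2 * c * RCLike.re (Φᴴ * Φ).trace
        + c ^ 2 * RCLike.re P.trace := by
  have hSP : Φ * Φᴴ * P = Φ * Φᴴ := by rw [Matrix.mul_assoc, ← hPh, ← conjTranspose_mul, hPΦ]
  have hPS : P * (Φ * Φᴴ) = Φ * Φᴴ := by rw [← Matrix.mul_assoc, hPΦ]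
  have hSS : (Φ * Φᴴ * (Φ * Φᴴ)).trace = (Φᴴ * Φ * (Φᴴ * Φ)ᴴ).trace := by
    rw [conjTranspose_mul, conjTranspose_conjTranspose, Matrix.mul_assoc, trace_mul_comm,
      Matrix.mul_assoc, Matrix.mul_assoc, Matrix.mul_assoc]
  have htr : (Φ * Φᴴ).trace = (Φᴴ * Φ).trace := trace_mul_comm _ _
  rw [sum_sum_norm_sq_eq_re_trace, sum_sum_norm_sq_eq_re_trace, conjTranspose_sub,
    conjTranspose_smul, conjTranspose_mul, conjTranspose_conjTranspose, hPh, RCLike.star_def,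
    RCLike.conj_ofReal]
  simp only [sub_mul, mul_sub, Matrix.smul_mul, Matrix.mul_smul, hSP, hPS, hPP, smul_smul,
    trace_sub, trace_smul, hSS, htr, smul_eq_mul, map_sub, RCLike.re_ofReal_mul,
    ← RCLike.ofReal_mul]
  ring

theorem sum_offDiag_norm_sq_conjTranspose_mul_self_eq [DecidableEq n] (Φ : Matrix m n 𝕜)
    {P : Matrix m m 𝕜} (hPh : Pᴴ = P) (hPP : P * P = P) (hPΦ : P * Φ = Φ) {d : ℕ} (hd : d ≠ 0)
    (htr : P.trace = d) {r : ℝ} (hnorm : ∀ j, (Φᴴ * Φ) j j = r) :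
    ∑ p ∈ Finset.univ.offDiag, ‖(Φᴴ * Φ) p.1 p.2‖ ^ 2 =
      ∑ i, ∑ j, ‖(Φ * Φᴴ - ((r * Fintype.card n / d : ℝ) : 𝕜) • P) i j‖ ^ 2
        + r ^ 2 * Fintype.card n * (Fintype.card n - d) / d := by
  have hdiag : ∑ i, ‖(Φᴴ * Φ) i i‖ ^ 2 = Fintype.card n * r ^ 2 := by simp [hnorm]
  have hG : RCLike.re (Φᴴ * Φ).trace = Fintype.card n * r := by simp [trace, hnorm]
  have hP : RCLike.re P.trace = d := by simp [htr]
  rw [sum_sum_norm_sq_mul_conjTranspose_sub_smul Φ hPh hPP hPΦ,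
    Finset.sum_sum_eq_sum_add_sum_offDiag, hdiag, hG, hP]
  field_simp
  ring

end Frobenius

end Matrix

/-- Equality in the Welch bound: for `n` equal-norm columns (squared norm `r > 0`) lying in a
`d`-dimensional subspace `H` of `ℂ^m`, the maximum of `|⟨φᵢ, φⱼ⟩|/r` over `i ≠ j` equals
`√((n − d)/(d(n − 1)))` iff the columns form an equiangular tight frame for `H`,
i.e. `ΦΦ* = (rn/d) P` with `P` the orthogonal projection onto `H` and the columns are
equiangular. -/
theorem welch_equality_iff_etf (m n d : ℕ) (hn : 2 ≤ n) (hd : 1 ≤ d) (hdn : d ≤ n)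
    (Φ : Matrix (Fin m) (Fin n) ℂ)
    (H : Submodule ℂ (Fin m → ℂ)) (hdim : Module.finrank ℂ H = d)
    (hcol : ∀ j, (fun i => Φ i j) ∈ H)
    (r : ℝ) (hr : 0 < r) (hnorm : ∀ j, (Φᴴ * Φ) j j = (r : ℂ))
    (P : Matrix (Fin m) (Fin m) ℂ) (hP1 : Pᴴ = P)
    (hP2 : ∀ x ∈ H, P *ᵥ x = x) (hP3 : ∀ x, P *ᵥ x ∈ H) :
    IsGreatest {x : ℝ | ∃ i j : Fin n, i ≠ j ∧ x = ‖(Φᴴ * Φ) i j‖ / r}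
        (Real.sqrt (((n : ℝ) - d) / (d * ((n : ℝ) - 1)))) ↔
      (Φ * Φᴴ = ((r * n / d : ℝ) : ℂ) • P ∧
        ∃ w : ℝ, 0 ≤ w ∧ ∀ i j : Fin n, i ≠ j → ‖(Φᴴ * Φ) i j‖ = w) := by
  have hP : LinearMap.IsProj H P.toLin' := ⟨hP3, hP2⟩
  have htrP : P.trace = d := by rw [trace_eq_finrank_of_isProj hP, hdim]
  have hid := sum_offDiag_norm_sq_conjTranspose_mul_self_eq Φ hP1 (mul_self_eq_self_of_isProj hP)
    (mul_eq_self_of_isProj hP hcol) (by omega) htrP hnorm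
  set s : Finset (Fin n × Fin n) := Finset.univ.offDiag with hs
  set q : ℝ := ((n : ℝ) - d) / (d * ((n : ℝ) - 1)) with hq
  have hsum : ∑ p ∈ s, ‖(Φᴴ * Φ) p.1 p.2‖ ^ 2 =
      ∑ i, ∑ j, ‖(Φ * Φᴴ - ((r * n / d : ℝ) : ℂ) • P) i j‖ ^ 2 + s.card * (r * √q) ^ 2 := by
    have hn1 : (n : ℝ) - 1 ≠ 0 := (sub_pos.2 (by exact_mod_cast hn : (1 : ℝ) < n)).ne'
    have hdn' : (d : ℝ) ≤ n := by exact_mod_cast hdn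
    have hd0 : (0 : ℝ) < d := by exact_mod_cast hd
    rw [hid, hs, Finset.offDiag_card, mul_pow, Real.sq_sqrt (by bound), Finset.card_univ,
      Fintype.card_fin, Nat.cast_sub (Nat.le_mul_self n), Nat.cast_mul, hq]
    congr 1
    field_simp
  have hset : {x : ℝ | ∃ i j : Fin n, i ≠ j ∧ x = ‖(Φᴴ * Φ) i j‖ / r} =
      (fun p : Fin n × Fin n => ‖(Φᴴ * Φ) p.1 p.2‖ / r) '' s := by
    ext
    simp [hs, eq_comm]
  have hne : s.Nonempty := ⟨(⟨0, by omega⟩, ⟨1, by omega⟩), by simp [hs, Fin.ext_iff]⟩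
  rw [hset, isGreatest_image_div_iff_of_sum_sq_eq hne (fun _ _ => norm_nonneg _) hr
    (Real.sqrt_nonneg _) (by positivity) hsum, sum_sum_norm_sq_eq_zero_iff, sub_eq_zero]
  simp [hs, Finset.mem_offDiag]
end

section
/- Let v, k, λ be integers with 0 ≤ λ < k, and let X be a square v×v real matrix with entries in {0,1} satisfying X·1 = k·1, Xᵀ·1 = k·1, and XᵀX = (k − λ)·I + λ·J. Then X·Xᵀ = (k − λ)·I + λ·J. (The dual of a symmetric BIBD(v,k,λ) is again a BIBD(v,k,λ); in particular the dual of a projective plane of order q is a projective plane of order q.) -/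
open Matrix

/-- The dual of a symmetric `BIBD(v,k,λ)` is again a `BIBD(v,k,λ)`: if a square `{0,1}`
matrix `X` has row and column sums `k` and `XᵀX = (k−λ)I + λJ` with `0 ≤ λ < k`, then
also `XXᵀ = (k−λ)I + λJ`. -/
theorem symmetric_bibd_dual (v k lam : ℕ) (hlk : lam < k)
    (X : Matrix (Fin v) (Fin v) ℝ)
    (h01 : ∀ i j, X i j = 0 ∨ X i j = 1)
    (hrow : X *ᵥ 1 = (k : ℝ) • 1)
    (hcol : Xᵀ *ᵥ 1 = (k : ℝ) • 1)
    (hgram : Xᵀ * X = ((k : ℝ) - lam) • (1 : Matrix (Fin v) (Fin v) ℝ) +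
      (lam : ℝ) • Matrix.of fun _ _ => 1) :
    X * Xᵀ = ((k : ℝ) - lam) • (1 : Matrix (Fin v) (Fin v) ℝ) +
      (lam : ℝ) • Matrix.of fun _ _ => 1 := by
  set J : Matrix (Fin v) (Fin v) ℝ := Matrix.of fun _ _ => 1 with hJ
  set a : ℝ := (k : ℝ) - lam with ha
  have ha0 : 0 < a := by
    have : (lam : ℝ) < k := by exact_mod_cast hlk
    linarith
  have hs0 : 0 < a + lam * v := by positivity
  have hane : a ≠ 0 := ne_of_gt ha0
  have hsne : a + lam * v ≠ 0 := ne_of_gt hs0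
  -- row and column sums
  have hXJ : X * J = (k : ℝ) • J := by
    ext i j
    have := congrFun hrow i
    simp [Matrix.mulVec, dotProduct] at this
    simp [hJ, Matrix.mul_apply, Matrix.smul_apply, this]
  have hJX : J * X = (k : ℝ) • J := by
    ext i j
    have := congrFun hcol j
    simp [Matrix.mulVec, dotProduct, Matrix.transpose_apply] at this
    simp [hJ, Matrix.mul_apply, Matrix.smul_apply]
    exact this
  have hJJ : J * J = (v : ℝ) • J := by
    ext i j
    simp [hJ, Matrix.mul_apply, Matrix.smul_apply]
  -- product of two matrices of the form c•1 + d•J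
  have key : ∀ c d c' d' : ℝ, (c • (1 : Matrix (Fin v) (Fin v) ℝ) + d • J) *
      (c' • 1 + d' • J) = (c * c') • 1 + (c * d' + d * c' + d * d' * v) • J := by
    intro c d c' d'
    rw [Matrix.add_mul, Matrix.mul_add, Matrix.mul_add]
    simp only [smul_mul_assoc, mul_smul_comm, Matrix.one_mul, Matrix.mul_one, hJJ, smul_smul]
    rw [add_smul, add_smul (c * d')]
    ring_nf
    abel
  set e : ℝ := -((lam : ℝ) / (a * (a + lam * v))) with he
  set N : Matrix (Fin v) (Fin v) ℝ := a⁻¹ • 1 + e • J with hN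
  set M : Matrix (Fin v) (Fin v) ℝ := a • 1 + (lam : ℝ) • J with hM
  have hNM : N * M = 1 := by
    rw [hN, hM, key]
    have h1 : a⁻¹ * a = 1 := inv_mul_cancel₀ hane
    have h2 : a⁻¹ * ↑lam + e * a + e * ↑lam * ↑v = 0 := by
      rw [he]; field_simp; ring
    rw [h1, h2, zero_smul, one_smul, add_zero]
  -- X has left inverse N * Xᵀ; square, so two-sided
  have hleft : (N * Xᵀ) * X = 1 := by
    rw [Matrix.mul_assoc, hgram]
    exact hNM
  have hright : X * (N * Xᵀ) = 1 := mul_eq_one_comm.mp hleft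
  -- X commutes with M
  have hcomm : X * M = M * X := by
    rw [hM, Matrix.mul_add, Matrix.add_mul, Matrix.mul_smul, Matrix.smul_mul,
      Matrix.mul_smul, Matrix.smul_mul, Matrix.mul_one, Matrix.one_mul, hXJ, hJX]
  calc X * Xᵀ = X * Xᵀ * (X * (N * Xᵀ)) := by rw [hright, Matrix.mul_one]
    _ = X * (Xᵀ * X) * (N * Xᵀ) := by simp only [Matrix.mul_assoc]
    _ = X * M * (N * Xᵀ) := by rw [hgram]
    _ = M * (X * (N * Xᵀ)) := by rw [hcomm, Matrix.mul_assoc]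
    _ = M := by rw [hright, Matrix.mul_one]
end

section
/- Let q ≥ 1 and let X be a b×v real matrix with entries in {0,1} such that every column of X has exactly q+1 ones (Xᵀ·1 = (q+1)·1) and any two distinct columns of X have dot product exactly 1. If S is a set of columns such that every row of X contains at most two ones among the columns of S, then |S| ≤ q + 2. -/
open Matrix

/-- In an incidence structure where every vertex lies on exactly `q+1` blocks and any two
distinct vertices lie on exactly one common block, an arc (a set `S` of vertices such that
every block contains at most two of them) has at most `q + 2` elements. -/
theorem arc_card_le (q b v : ℕ) (hq : 1 ≤ q)
    (X : Matrix (Fin b) (Fin v) ℝ)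
    (h01 : ∀ i j, X i j = 0 ∨ X i j = 1)
    (hcolsum : Xᵀ *ᵥ 1 = ((q : ℝ) + 1) • 1)
    (hdot : ∀ j j' : Fin v, j ≠ j' → (Xᵀ * X) j j' = 1)
    (S : Finset (Fin v)) (hS : ∀ i, ∑ j ∈ S, X i j ≤ 2) :
    S.card ≤ q + 2 := by
  rcases S.eq_empty_or_nonempty with rfl | ⟨j₀, hj₀⟩
  · simp
  have hcol : ∑ i, X i j₀ = (q : ℝ) + 1 := by
    have := congrFun hcolsum j₀
    simpa [mulVec, dotProduct, transpose_apply] using this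
  have h1 : ∑ j ∈ S.erase j₀, (Xᵀ * X) j₀ j = ((S.card : ℝ) - 1) := by
    rw [Finset.sum_congr rfl
      (fun j hj => hdot j₀ j (Ne.symm (Finset.ne_of_mem_erase hj)))]
    rw [Finset.sum_const, Finset.card_erase_of_mem hj₀]
    have : 1 ≤ S.card := Finset.card_pos.mpr ⟨j₀, hj₀⟩
    rw [nsmul_eq_mul, mul_one, Nat.cast_sub this, Nat.cast_one]
  have h2 : ∑ j ∈ S.erase j₀, (Xᵀ * X) j₀ j
      = ∑ i, ∑ j ∈ S.erase j₀, X i j₀ * X i j := by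
    rw [Finset.sum_comm]
    refine Finset.sum_congr rfl fun j _ => ?_
    simp [Matrix.mul_apply, transpose_apply]
  have hnn : ∀ i j, (0:ℝ) ≤ X i j := by
    intro i j; rcases h01 i j with h | h <;> simp [h]
  have h3 : ∀ i, ∑ j ∈ S.erase j₀, X i j₀ * X i j ≤ X i j₀ := by
    intro i
    rcases h01 i j₀ with h | h
    · simp [h]
    · simp only [h, one_mul]
      have hsplit : X i j₀ + ∑ j ∈ S.erase j₀, X i j = ∑ j ∈ S, X i j :=
        Finset.add_sum_erase S _ hj₀
      have := hS i
      rw [h] at hsplit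
      linarith
  have key : (S.card : ℝ) - 1 ≤ (q : ℝ) + 1 := by
    calc (S.card : ℝ) - 1 = ∑ i, ∑ j ∈ S.erase j₀, X i j₀ * X i j := by
          rw [← h2, h1]
      _ ≤ ∑ i, X i j₀ := Finset.sum_le_sum fun i _ => h3 i
      _ = (q : ℝ) + 1 := hcol
  have : (S.card : ℝ) ≤ (q : ℝ) + 2 := by linarith
  exact_mod_cast this
end

section
/- Let q ≥ 2 and let X be a (q²+q+1)×(q²+q+1) real matrix with entries in {0,1} satisfying X·1 = (q+1)·1, Xᵀ·1 = (q+1)·1 and XᵀX = q·I + J (the incidence matrix of a projective plane of order q). Suppose S is a set of exactly q+2 columns such that every row of X contains at most two ones among the columns of S (a hyperoval). Then: (a) every row of X contains exactly 0 or exactly 2 ones among the columns of S; and (b) q is even. -/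
/-!
Write `r i` for the number of points of `S` on the block `i`. Counting incident pairs, and via
`XᵀX = qI + J` incident triples, gives `∑ r i = (q+1)(q+2)` and `∑ r i ^ 2 = (q+2)(2q+2)`, so
`∑ r i (2 - r i) = 0`. Every term is nonnegative because `0 ≤ r i ≤ 2`, so each `r i` is `0` or
`2`. For a point `p ∉ S`, each point of `S` lies on exactly one block through `p`, and those
blocks meet `S` in `0` or `2` points, so `q + 2` is even.
-/

open Matrix

namespace Matrix

variable {m n R : Type*} [Fintype m] [CommSemiring R] (X : Matrix m n R)

theorem sum_sum_eq_card_mul_of_transpose_mulVec_one {c : R} (hcol : Xᵀ *ᵥ 1 = c • 1)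
    (S : Finset n) : ∑ i, ∑ j ∈ S, X i j = S.card * c := by
  have hcol' (j : n) : ∑ i, X i j = c := by
    simpa [mulVec, dotProduct] using congrFun hcol j
  exact Finset.sum_comm.trans (by simp [hcol'])

theorem sum_sum_mul_sum_eq_sum_sum_transpose_mul (S T : Finset n) :
    ∑ i, (∑ j ∈ S, X i j) * ∑ k ∈ T, X i k = ∑ j ∈ S, ∑ k ∈ T, (Xᵀ * X) j k := by
  simp only [Finset.sum_mul_sum, mul_apply, transpose_apply]
  exact Finset.sum_comm.trans (Finset.sum_congr rfl fun j _ => Finset.sum_comm)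

theorem sum_sum_eq_of_transpose_mul_eq [DecidableEq n] {q : R}
    (hgram : Xᵀ * X = q • 1 + of fun _ _ => 1) (S T : Finset n) :
    ∑ j ∈ S, ∑ k ∈ T, (Xᵀ * X) j k = (S ∩ T).card * q + S.card * T.card := by
  simp [hgram, one_apply, Finset.sum_add_distrib]

end Matrix

theorem eq_zero_or_eq_two_of_sum_sq_eq {ι R : Type*} [Fintype ι] [CommRing R] [LinearOrder R]
    [IsStrictOrderedRing R] {r : ι → R} (h0 : ∀ i, 0 ≤ r i) (h2 : ∀ i, r i ≤ 2)
    (hsum : ∑ i, r i ^ 2 = 2 * ∑ i, r i) (i : ι) : r i = 0 ∨ r i = 2 := by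
  have hterm_nonneg (i : ι) : 0 ≤ r i * (2 - r i) := mul_nonneg (h0 i) (sub_nonneg.mpr (h2 i))
  have hterm_sum : ∑ i, r i * (2 - r i) = 0 := by
    simp only [mul_sub, Finset.sum_sub_distrib, ← Finset.sum_mul, ← sq, hsum]
    ring
  have hi := (Finset.sum_eq_zero_iff_of_nonneg fun i _ => hterm_nonneg i).mp hterm_sum i
    (Finset.mem_univ i)
  rcases mul_eq_zero.mp hi with h | h
  · exact Or.inl h
  · exact Or.inr (sub_eq_zero.mp h).symm

theorem even_of_natCast_eq_sum {ι R : Type*} [Semiring R] [CharZero R] {s : Finset ι}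
    {f : ι → R} (hf : ∀ i ∈ s, f i = 0 ∨ f i = 2) {n : ℕ} (hn : (n : R) = ∑ i ∈ s, f i) :
    Even n := by
  classical
  have hf' : ∀ i ∈ s, f i = 2 * if f i = 2 then 1 else 0 := by
    intro i hi
    rcases hf i hi with h | h <;> simp [h]
  rw [Finset.sum_congr rfl hf', ← Finset.mul_sum, Finset.sum_boole] at hn
  exact ⟨_, by exact_mod_cast hn.trans (two_mul _)⟩

theorem hyperoval_even_general (q : ℕ) (hq : 2 ≤ q)
    (X : Matrix (Fin (q ^ 2 + q + 1)) (Fin (q ^ 2 + q + 1)) ℝ)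
    (h01 : ∀ i j, X i j = 0 ∨ X i j = 1)
    (hcol : Xᵀ *ᵥ 1 = ((q : ℝ) + 1) • 1)
    (hgram : Xᵀ * X = (q : ℝ) • 1 + Matrix.of fun _ _ => 1)
    (S : Finset (Fin (q ^ 2 + q + 1))) (hcard : S.card = q + 2)
    (hhyp : ∀ i, ∑ j ∈ S, X i j ≤ 2) :
    (∀ i, ∑ j ∈ S, X i j = 0 ∨ ∑ j ∈ S, X i j = 2) ∧ Even q := by
  have hpairs := X.sum_sum_eq_card_mul_of_transpose_mulVec_one hcol S
  have htriples := (X.sum_sum_mul_sum_eq_sum_sum_transpose_mul S S).trans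
    (X.sum_sum_eq_of_transpose_mul_eq hgram S S)
  have hmeet : ∀ i, ∑ j ∈ S, X i j = 0 ∨ ∑ j ∈ S, X i j = 2 := by
    refine eq_zero_or_eq_two_of_sum_sq_eq (fun i => Finset.sum_nonneg fun j _ => ?_) hhyp ?_
    · rcases h01 i j with h | h <;> simp [h]
    · simp only [sq, htriples, hpairs, Finset.inter_self, hcard]
      push_cast
      ring
  refine ⟨hmeet, ?_⟩
  obtain ⟨p, -, hp⟩ := Finset.exists_mem_notMem_of_card_lt_card (t := Finset.univ)
    (s := S) (by rw [hcard, Finset.card_univ, Fintype.card_fin]; nlinarith)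
  have hthrough_p := (X.sum_sum_mul_sum_eq_sum_sum_transpose_mul {p} S).trans
    (X.sum_sum_eq_of_transpose_mul_eq hgram {p} S)
  simp only [Finset.sum_singleton, Finset.singleton_inter_of_notMem hp, Finset.card_empty,
    Finset.card_singleton, Nat.cast_zero, Nat.cast_one, zero_mul, one_mul, zero_add] at hthrough_p
  have heven : Even S.card := by
    refine even_of_natCast_eq_sum (s := Finset.univ) (fun i _ => ?_) hthrough_p.symm
    rcases h01 i p with h | h <;> rcases hmeet i with h' | h' <;> simp [h, h']
  rw [hcard] at heven
  exact (Nat.even_add.mp heven).mpr even_two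

/-- If `S` is a hyperoval (a set of `q+2` vertices, no three on a common block) in a
projective plane of order `q`, then every block meets `S` in exactly `0` or `2` vertices,
and `q` is even. -/
theorem hyperoval_even (q : ℕ) (hq : 2 ≤ q)
    (X : Matrix (Fin (q ^ 2 + q + 1)) (Fin (q ^ 2 + q + 1)) ℝ)
    (h01 : ∀ i j, X i j = 0 ∨ X i j = 1)
    (hrow : X *ᵥ 1 = ((q : ℝ) + 1) • 1)
    (hcol : Xᵀ *ᵥ 1 = ((q : ℝ) + 1) • 1)
    (hgram : Xᵀ * X = (q : ℝ) • 1 + Matrix.of fun _ _ => 1)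
    (S : Finset (Fin (q ^ 2 + q + 1))) (hcard : S.card = q + 2)
    (hhyp : ∀ i, ∑ j ∈ S, X i j ≤ 2) :
    (∀ i, ∑ j ∈ S, X i j = 0 ∨ ∑ j ∈ S, X i j = 2) ∧ Even q :=
  hyperoval_even_general q hq X h01 hcol hgram S hcard hhyp
end

section
/- Let q ≥ 2 and let X be a (q²+q+1)×(q²+q+1) real matrix with entries in {0,1} satisfying X·1 = (q+1)·1, Xᵀ·1 = (q+1)·1, XᵀX = q·I + J and X·Xᵀ = q·I + J (the incidence matrix of a projective plane of order q). Let S be a set of exactly q+2 columns such that every row of X contains at most two ones among the columns of S (a hyperoval). Let R be the set of rows of X that contain no ones among the columns of S (exterior blocks), and let T be the set of columns not in S. Then |R| = q(q−1)/2, the submatrix Y = X[R, T] satisfies Y·Yᵀ = q·I + J (any two distinct exterior blocks meet in exactly one vertex, which lies outside S), and Yᵀ·1 = (q/2)·1 (every vertex outside S lies on exactly q/2 exterior blocks). In particular Yᵀ is the incidence matrix of a BIBD(q(q−1)/2, q/2, 1). -/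
/-!
Let `s i = ∑ j ∈ S, X i j` be the number of points of `S` on block `i`. Double counting with
the column sums and with `XᵀX = qI + J` gives `∑ s i = (q+2)(q+1)` and `∑ s i ^ 2 = (q+2)(2q+2)`,
so `∑ s i (2 - s i) = 0`; as `0 ≤ s i ≤ 2`, every block meets `S` in `0` or `2` points. Then
`2 - s i` is twice the indicator of exterior blocks, and summing it against `1` or against the
incidences of a point outside `S` counts the exterior blocks and those through that point.
Two exterior blocks vanish on `S`, so their inner product in `X[R, T]` is the one in `X`.
-/

open Matrix Finset

section Incidence

variable {R ι κ : Type*} [Fintype ι]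

theorem sum_apply_eq_of_transpose_mulVec_one [CommSemiring R] {X : Matrix ι κ R} {c : R}
    (hcol : Xᵀ *ᵥ 1 = c • 1) (j : κ) : ∑ i, X i j = c := by
  simpa [mulVec, dotProduct] using congrFun hcol j

theorem sum_sum_mem_eq_of_transpose_mulVec_one [CommSemiring R] {X : Matrix ι κ R} {c : R}
    (hcol : Xᵀ *ᵥ 1 = c • 1) (S : Finset κ) : ∑ i, ∑ k ∈ S, X i k = #S * c := by
  refine sum_comm.trans ?_
  simp [sum_apply_eq_of_transpose_mulVec_one hcol]

theorem sum_sum_mem_mul_eq_of_transpose_mul_self [CommRing R] [DecidableEq κ]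
    {X : Matrix ι κ R} {n : R} (hgram : Xᵀ * X = n • 1 + of fun _ _ => 1) (S : Finset κ)
    (j : κ) : ∑ i, (∑ k ∈ S, X i k) * X i j = (if j ∈ S then n else 0) + #S := by
  have hentry : ∀ k, ∑ i, X i k * X i j = (if k = j then n else 0) + 1 := fun k => by
    simpa [mul_apply, one_apply] using congrFun (congrFun hgram k) j
  simp_rw [sum_mul]
  rw [sum_comm]
  simp [hentry, sum_add_distrib]

theorem eq_zero_or_eq_of_sum_mul_sub_eq_zero [Ring R] [LinearOrder R] [IsStrictOrderedRing R]
    {f : ι → R} {a : R} (h0 : ∀ i, 0 ≤ f i) (ha : ∀ i, f i ≤ a)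
    (hsum : ∑ i, f i * (a - f i) = 0) (i : ι) : f i = 0 ∨ f i = a := by
  have hi := (sum_eq_zero_iff_of_nonneg fun i _ => mul_nonneg (h0 i) (sub_nonneg.2 (ha i))).1
    hsum i (mem_univ i)
  rcases mul_eq_zero.1 hi with h | h
  · exact Or.inl h
  · exact Or.inr (sub_eq_zero.1 h).symm

theorem sum_mem_eq_zero_or_two [CommRing R] [LinearOrder R] [IsStrictOrderedRing R]
    [DecidableEq κ] {X : Matrix ι κ R} {n c : R} (hX : ∀ i j, 0 ≤ X i j)
    (hcol : Xᵀ *ᵥ 1 = c • 1) (hgram : Xᵀ * X = n • 1 + of fun _ _ => 1) {S : Finset κ}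
    (hS : (#S : R) + n = 2 * c) (hmeet : ∀ i, ∑ j ∈ S, X i j ≤ 2) (i : ι) :
    ∑ j ∈ S, X i j = 0 ∨ ∑ j ∈ S, X i j = 2 := by
  refine eq_zero_or_eq_of_sum_mul_sub_eq_zero (fun i => sum_nonneg fun j _ => hX i j) hmeet ?_ i
  have hsq : ∑ i, (∑ j ∈ S, X i j) * ∑ j ∈ S, X i j = #S * (n + #S) := by
    simp_rw [mul_sum (s := S)]
    rw [sum_comm, sum_congr rfl fun j hj => by
      rw [sum_sum_mem_mul_eq_of_transpose_mul_self hgram, if_pos hj]]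
    simp [mul_add]
  calc ∑ i, (∑ j ∈ S, X i j) * (2 - ∑ j ∈ S, X i j)
      = 2 * ∑ i, ∑ j ∈ S, X i j - ∑ i, (∑ j ∈ S, X i j) * ∑ j ∈ S, X i j := by
        simp only [mul_sub, sum_sub_distrib, mul_sum, mul_comm]
    _ = 0 := by
        rw [hsq, sum_sum_mem_eq_of_transpose_mulVec_one hcol]
        linear_combination (-(#S : R)) * hS

theorem sum_sub_mul_eq_mul_sum_subtype [CommRing R] [DecidableEq R] {f w : ι → R} {a : R}
    (hf : ∀ i, f i = 0 ∨ f i = a) :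
    ∑ i, (a - f i) * w i = a * ∑ i : {i // f i = 0}, w i := by
  rw [← sum_subtype (univ.filter (f · = 0)) (by simp), sum_filter, mul_sum]
  refine sum_congr rfl fun i _ => ?_
  rcases hf i with h | h <;> split_ifs <;> simp_all

theorem sum_subtype_notMem_eq_sum [AddCommMonoid R] [Fintype κ] [DecidableEq κ] {S : Finset κ}
    {f : κ → R} (hf : ∀ j ∈ S, f j = 0) : ∑ j : {j // j ∉ S}, f j = ∑ j, f j := by
  rw [← sum_subtype Sᶜ (fun _ => mem_compl) f, ← sum_compl_add_sum S f, sum_eq_zero hf,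
    add_zero]

section TypeZeroTwo

variable [CommRing R] [DecidableEq R] {X : Matrix ι κ R} {S : Finset κ}
  (hmeet : ∀ i, ∑ j ∈ S, X i j = 0 ∨ ∑ j ∈ S, X i j = 2)
include hmeet

theorem two_mul_card_subtype_sum_eq_zero {c : R} (hcol : Xᵀ *ᵥ 1 = c • 1) :
    2 * (Fintype.card {i // ∑ j ∈ S, X i j = 0} : R) = 2 * Fintype.card ι - #S * c := by
  have h := sum_sub_mul_eq_mul_sum_subtype (w := 1) hmeet
  simp only [Pi.one_apply, mul_one, sum_sub_distrib, sum_const, card_univ, nsmul_eq_mul] at h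
  rw [← h, sum_sum_mem_eq_of_transpose_mulVec_one hcol]
  ring

theorem two_mul_sum_subtype_sum_eq_zero_apply [DecidableEq κ] {n c : R}
    (hcol : Xᵀ *ᵥ 1 = c • 1) (hgram : Xᵀ * X = n • 1 + of fun _ _ => 1) {j : κ} (hj : j ∉ S) :
    2 * ∑ i : {i // ∑ j ∈ S, X i j = 0}, X i j = 2 * c - #S := by
  rw [← sum_sub_mul_eq_mul_sum_subtype (w := fun i => X i j) hmeet]
  simp only [sub_mul, sum_sub_distrib, ← mul_sum]
  rw [sum_apply_eq_of_transpose_mulVec_one hcol, sum_sum_mem_mul_eq_of_transpose_mul_self hgram,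
    if_neg hj, zero_add]

end TypeZeroTwo

end Incidence

open Matrix in
open Classical in
theorem hyperoval_exterior_blocks_general (q : ℕ)
    (X : Matrix (Fin (q ^ 2 + q + 1)) (Fin (q ^ 2 + q + 1)) ℝ)
    (h01 : ∀ i j, X i j = 0 ∨ X i j = 1)
    (hcol : Xᵀ *ᵥ 1 = ((q : ℝ) + 1) • 1)
    (hgram : Xᵀ * X = (q : ℝ) • 1 + Matrix.of fun _ _ => 1)
    (hgram' : X * Xᵀ = (q : ℝ) • 1 + Matrix.of fun _ _ => 1)
    (S : Finset (Fin (q ^ 2 + q + 1))) (hcard : S.card = q + 2)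
    (hhyp : ∀ i, ∑ j ∈ S, X i j ≤ 2) :
    Nat.card {i // ∑ j ∈ S, X i j = 0} = q * (q - 1) / 2 ∧
    (let Y : Matrix {i // ∑ j ∈ S, X i j = 0} {j // j ∉ S} ℝ :=
        Matrix.of fun i j => X i.1 j.1
     (Y * Yᵀ = (q : ℝ) • 1 + Matrix.of fun _ _ => (1 : ℝ)) ∧
       (Yᵀ *ᵥ 1 = ((q : ℝ) / 2) • 1)) := by
  have hX : ∀ i j, 0 ≤ X i j := fun i j => by rcases h01 i j with h | h <;> simp [h]
  have hS : (#S : ℝ) + q = 2 * (q + 1) := by rw [hcard]; push_cast; ring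
  have hmeet := sum_mem_eq_zero_or_two hX hcol hgram hS hhyp
  have hvanish : ∀ i, ∑ j ∈ S, X i j = 0 → ∀ j ∈ S, X i j = 0 := fun i hi =>
    (sum_eq_zero_iff_of_nonneg fun j _ => hX i j).1 hi
  refine ⟨?_, ?_, ?_⟩
  · have h := two_mul_card_subtype_sum_eq_zero hmeet hcol
    rw [hcard, Fintype.card_fin] at h
    have h2 : ((2 * Fintype.card {i // ∑ j ∈ S, X i j = 0} : ℕ) : ℝ) = (q * (q - 1) : ℕ) := by
      rcases q with _ | m <;> push_cast at h ⊢ <;> linarith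
    rw [Nat.card_eq_fintype_card, ← Nat.cast_inj.1 h2, Nat.mul_div_cancel_left _ two_pos]
  · ext i i'
    simp only [mul_apply, transpose_apply, of_apply]
    rw [sum_subtype_notMem_eq_sum (f := fun j => X i j * X i' j) fun j hj => by
      rw [hvanish i i.2 j hj, zero_mul]]
    simpa [mul_apply, one_apply, Subtype.ext_iff] using congrFun (congrFun hgram' i) i'
  · ext j
    have h := two_mul_sum_subtype_sum_eq_zero_apply hmeet hcol hgram j.2
    rw [hcard] at h
    simp only [mulVec, dotProduct, transpose_apply, of_apply, Pi.one_apply, mul_one,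
      Pi.smul_apply, smul_eq_mul]
    push_cast at h
    linarith

open Matrix in
open Classical in
/-- Let `S` be a hyperoval in a projective plane of order `q`. Let `R` be the set of
exterior blocks (rows with no ones among the columns of `S`) and `T` the set of vertices
outside `S`. Then `|R| = q(q−1)/2`, and the submatrix `Y = X[R,T]` satisfies
`YYᵀ = qI + J` and has column sums `q/2`; i.e. `Yᵀ` is the incidence matrix of a
`BIBD(q(q−1)/2, q/2, 1)` (a Denniston design). -/
theorem hyperoval_exterior_blocks (q : ℕ) (hq : 2 ≤ q)
    (X : Matrix (Fin (q ^ 2 + q + 1)) (Fin (q ^ 2 + q + 1)) ℝ)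
    (h01 : ∀ i j, X i j = 0 ∨ X i j = 1)
    (hrow : X *ᵥ 1 = ((q : ℝ) + 1) • 1)
    (hcol : Xᵀ *ᵥ 1 = ((q : ℝ) + 1) • 1)
    (hgram : Xᵀ * X = (q : ℝ) • 1 + Matrix.of fun _ _ => 1)
    (hgram' : X * Xᵀ = (q : ℝ) • 1 + Matrix.of fun _ _ => 1)
    (S : Finset (Fin (q ^ 2 + q + 1))) (hcard : S.card = q + 2)
    (hhyp : ∀ i, ∑ j ∈ S, X i j ≤ 2) :
    Nat.card {i // ∑ j ∈ S, X i j = 0} = q * (q - 1) / 2 ∧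
    (let Y : Matrix {i // ∑ j ∈ S, X i j = 0} {j // j ∉ S} ℝ :=
        Matrix.of fun i j => X i.1 j.1
     (Y * Yᵀ = (q : ℝ) • 1 + Matrix.of fun _ _ => (1 : ℝ)) ∧
       (Yᵀ *ᵥ 1 = ((q : ℝ) / 2) • 1)) :=
  hyperoval_exterior_blocks_general q X h01 hcol hgram hgram' S hcard hhyp
end

section
/- Let m and n be integers with m ≥ 2, n ≥ 2 and m ≠ n, and let d be a real number with 0 < d ≤ min(m, n). If (1/n)·√((n − d)/(d(n − 1))) = (1/m)·√((m − d)/(d(m − 1))), then 1/d = 1/m + 1/n − 1/(m + n − 1). -/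
/-- If the (scaled) Welch bounds of the `n` columns and of the `m` rows of a matrix of
rank `d` agree, i.e. `(1/n)√((n−d)/(d(n−1))) = (1/m)√((m−d)/(d(m−1)))` with `m ≠ n`,
then `1/d = 1/m + 1/n − 1/(m+n−1)`. -/
theorem welch_bounds_match (m n : ℕ) (hm : 2 ≤ m) (hn : 2 ≤ n) (hmn : m ≠ n)
    (d : ℝ) (hd : 0 < d) (hdm : d ≤ min (m : ℝ) (n : ℝ))
    (h : (1 / (n : ℝ)) * Real.sqrt (((n : ℝ) - d) / (d * ((n : ℝ) - 1)))
       = (1 / (m : ℝ)) * Real.sqrt (((m : ℝ) - d) / (d * ((m : ℝ) - 1)))) :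
    1 / d = 1 / (m : ℝ) + 1 / (n : ℝ) - 1 / ((m : ℝ) + (n : ℝ) - 1) := by
  have hm2 : (2:ℝ) ≤ (m:ℝ) := by exact_mod_cast hm
  have hn2 : (2:ℝ) ≤ (n:ℝ) := by exact_mod_cast hn
  have hdM : d ≤ (m:ℝ) := le_trans hdm (min_le_left _ _)
  have hdN : d ≤ (n:ℝ) := le_trans hdm (min_le_right _ _)
  have hm1 : (0:ℝ) < (m:ℝ) - 1 := by linarith
  have hn1 : (0:ℝ) < (n:ℝ) - 1 := by linarith
  have hm0 : (0:ℝ) < (m:ℝ) := by linarith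
  have hn0 : (0:ℝ) < (n:ℝ) := by linarith
  have hA : (0:ℝ) ≤ ((n:ℝ) - d) / (d * ((n:ℝ) - 1)) :=
    div_nonneg (by linarith) (by positivity)
  have hB : (0:ℝ) ≤ ((m:ℝ) - d) / (d * ((m:ℝ) - 1)) :=
    div_nonneg (by linarith) (by positivity)
  have hsq : (1 / (n:ℝ))^2 * (((n:ℝ) - d) / (d * ((n:ℝ) - 1)))
      = (1 / (m:ℝ))^2 * (((m:ℝ) - d) / (d * ((m:ℝ) - 1))) := by
    have := congrArg (fun x => x ^ 2) h
    simpa [mul_pow, Real.sq_sqrt hA, Real.sq_sqrt hB] using this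
  have hmnR : (m:ℝ) ≠ (n:ℝ) := by exact_mod_cast hmn
  have hmn0 : (m:ℝ) - (n:ℝ) ≠ 0 := sub_ne_zero.mpr hmnR
  have hpoly : (m:ℝ)^2 * ((m:ℝ) - 1) * ((n:ℝ) - d)
      = (n:ℝ)^2 * ((n:ℝ) - 1) * ((m:ℝ) - d) := by
    field_simp at hsq
    nlinarith [hsq, hd.ne', hm0.ne', hn0.ne']
  have key : d * ((m:ℝ)^2 + (m:ℝ)*(n:ℝ) + (n:ℝ)^2 - (m:ℝ) - (n:ℝ))
      = (m:ℝ) * (n:ℝ) * ((m:ℝ) + (n:ℝ) - 1) := by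
    have := mul_left_cancel₀ hmn0 (show ((m:ℝ) - n) * (d * ((m:ℝ)^2 + (m:ℝ)*(n:ℝ) + (n:ℝ)^2 - (m:ℝ) - (n:ℝ))) = ((m:ℝ) - n) * ((m:ℝ) * (n:ℝ) * ((m:ℝ) + (n:ℝ) - 1)) by linear_combination -hpoly)
    exact this
  have hmn1 : (0:ℝ) < (m:ℝ) + (n:ℝ) - 1 := by linarith
  have hq : (0:ℝ) < (m:ℝ)^2 + (m:ℝ)*(n:ℝ) + (n:ℝ)^2 - (m:ℝ) - (n:ℝ) := by nlinarith
  field_simp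
  linear_combination -key
end

section
/- Let q ≥ 2 be an integer, b = q(q+1), v = q², v₀ = q(q−1)/2. Let Z be a b×v matrix with entries in {0,1} satisfying Z·1 = q·1 and ZᵀZ = q·I + J (an affine plane of order q), and suppose Z(i,j) = 0 whenever j ≤ v₀ and i > q² − 1. For each j = 1,…,v let E_j be a b×(q+1) complex matrix with entries in {0,1} such that E_jᵀE_j = I and (E_j·1)(i) = Z(i,j) for every i (an embedding for column j); for j > v₀ assume additionally E_j(i,l) = 0 whenever either (i > q² − 1 and l ≤ q − 1) or (i ≤ q² − 1 and l ≥ q). Let s_1,…,s_{q+2} ∈ ℂ^{q+1} satisfy |s_l(i)| = 1 for all i, l and |⟨s_l, s_{l′}⟩| = 1 for all l ≠ l′ (a unimodular simplex), and let c_1,…,c_q ∈ ℂ^{q+1} satisfy |c_l(i)| = 1 for all i, l, c_l(q) + c_l(q+1) = 0 for all l, and |⟨c_l, c_{l′}⟩| = 1 for all l ≠ l′ (a unimodular cosimplex). Consider the family of q(q²+q−1) vectors in ℂ^b consisting of E_j s_l for 1 ≤ j ≤ v₀, 1 ≤ l ≤ q+2, together with E_j c_l for v₀ < j ≤ v, 1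 ≤ l ≤ q. Then: every vector of the family lies in the subspace H = { x ∈ ℂ^b : x(q²) + x(q²+1) + ⋯ + x(q²+q) = 0 } (which has dimension q² + q − 1); every vector has squared norm q+1; any two distinct vectors of the family have inner product of modulus 1; and the sum of the rank-one outer products of these vectors equals q(q+1)·Π, where Π is the orthogonal projection of ℂ^b onto H. Hence the family is an equiangular tight frame of q(q²+q−1) vectors for the (q²+q−1)-dimensional subspace H. -/
/-!
Each embedding `E j` has a single `1` in every column, so `E j` is the column selection
`(1 : Matrix).submatrix id (σ j)`. Consequently vectors built from the same point `j` have the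
inner products of the seed vectors, while for `j ≠ j'` the matrix `(E j)ᴴ * E j'` has a single
nonzero entry (two points share exactly one line), so every cross inner product is a product of
two unimodular numbers.

Comparing Frobenius norms, `‖S‖² = ∑ |⟨x l, x l'⟩|²` for the frame operator `S` of a unimodular
equiangular family, forces the frame operator of the simplex to be `(q + 2) • 1` and that of the
cosimplex to be `q • (1 - (e_{q-1} e_qᵀ + e_q e_{q-1}ᵀ))`. Conjugating these by the embeddings turns
the tight-frame identity into two counting facts about the affine plane. Every point lies on `0`
or `2` of the `q + 1` bottom lines, which forces any two bottom lines to meet. The points avoiding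
the bottom lines are equidistributed over the other lines: the variance of the number of such
points per line vanishes, so each of these lines carries exactly `q / 2` of them.
-/

open Matrix Finset
open scoped ComplexConjugate

section ZeroOne

variable {ι R : Type*} [AddCommMonoidWithOne R] [CharZero R]

theorem Finset.sum_eq_card_filter_of_zero_or_one [DecidableEq R] {s : Finset ι} {f : ι → R}
    (h01 : ∀ i ∈ s, f i = 0 ∨ f i = 1) : ∑ i ∈ s, f i = #{i ∈ s | f i = 1} := by
  rw [Finset.card_filter, Nat.cast_sum]
  refine Finset.sum_congr rfl fun i hi => ?_
  rcases h01 i hi with h | h <;> simp [h]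

theorem eq_zero_of_sum_eq_zero_of_zero_or_one [Fintype ι] {f : ι → R}
    (h01 : ∀ i, f i = 0 ∨ f i = 1) (hsum : ∑ i, f i = 0) : f = 0 := by
  classical
  rw [Finset.sum_eq_card_filter_of_zero_or_one fun i _ => h01 i, Nat.cast_eq_zero,
    Finset.card_eq_zero, Finset.filter_eq_empty_iff] at hsum
  exact funext fun i => (h01 i).resolve_right (hsum (Finset.mem_univ i))

theorem exists_eq_single_of_sum_eq_one [Fintype ι] [DecidableEq ι] {f : ι → R}
    (h01 : ∀ i, f i = 0 ∨ f i = 1) (hsum : ∑ i, f i = 1) : ∃ i₀, f = Pi.single i₀ 1 := by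
  classical
  rw [Finset.sum_eq_card_filter_of_zero_or_one fun i _ => h01 i, Nat.cast_eq_one,
    Finset.card_eq_one] at hsum
  obtain ⟨i₀, hi₀⟩ := hsum
  refine ⟨i₀, funext fun i => ?_⟩
  have hmem : f i = 1 ↔ i = i₀ := by simpa using congrArg (i ∈ ·) hi₀
  rcases h01 i with h | h
  · have : i ≠ i₀ := fun hi => by simp [hmem.2 hi] at h
    simp [h, this]
  · obtain rfl := hmem.1 h
    simp [h]

end ZeroOne

theorem Finset.eq_zero_of_sum_norm_sq_le {α E : Type*} [Fintype α] [NormedAddCommGroup E]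
    {f : α → E} {s : Finset α} (h : ∑ a, ‖f a‖ ^ 2 ≤ ∑ a ∈ s, ‖f a‖ ^ 2) :
    ∀ a ∉ s, f a = 0 := by
  classical
  rw [← Finset.sum_add_sum_compl s] at h
  have hzero := (Finset.sum_eq_zero_iff_of_nonneg fun a _ => sq_nonneg ‖f a‖).1
    (le_antisymm (by linarith) (Finset.sum_nonneg fun a _ => sq_nonneg _))
  exact fun a ha =>
    norm_eq_zero.1 <| (pow_eq_zero_iff two_ne_zero).1 (hzero a (Finset.mem_compl.2 ha))

theorem finrank_ker_sum_proj_add_one {ι K : Type*} [Fintype ι] [Field K] {s : Finset ι}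
    (hs : s.Nonempty) :
    Module.finrank K (LinearMap.ker (∑ i ∈ s, (LinearMap.proj i : (ι → K) →ₗ[K] K))) + 1 =
      Fintype.card ι := by
  classical
  obtain ⟨i₀, hi₀⟩ := hs
  have hne : (∑ i ∈ s, (LinearMap.proj i : (ι → K) →ₗ[K] K)) ≠ 0 := fun h => by
    simpa [Finset.sum_apply, Pi.single_apply, hi₀] using LinearMap.congr_fun h (Pi.single i₀ 1)
  rw [Module.Dual.finrank_ker_add_one_of_ne_zero hne, Module.finrank_fintype_fun_eq_card]

namespace Matrix

theorem exists_natCast_incidence {ι κ R : Type*} [Fintype ι] [Fintype κ] [DecidableEq κ]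
    [Semiring R] [CharZero R] {Z : Matrix ι κ R} {k a : ℕ} (h01 : ∀ i j, Z i j = 0 ∨ Z i j = 1)
    (hrow : Z *ᵥ 1 = (k : R) • 1) (hgram : Zᵀ * Z = (a : R) • 1 + of fun _ _ => 1) :
    ∃ N : Matrix ι κ ℕ, Z = N.map (↑) ∧ (∀ i j, N i j ≤ 1) ∧ (∀ i, ∑ j, N i j = k) ∧
      ∀ j j', ∑ i, N i j * N i j' = if j = j' then a + 1 else 1 := by
  classical
  set N : Matrix ι κ ℕ := of fun i j => if Z i j = 1 then 1 else 0
  have hZ : Z = N.map (↑) := by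
    ext i j
    rcases h01 i j with h | h <;> simp [N, h]
  refine ⟨N, hZ, fun i j => by simp only [N, of_apply]; split_ifs <;> omega, fun i => ?_,
    fun j j' => ?_⟩
  · have h := congrFun hrow i
    simp only [hZ, mulVec, dotProduct, map_apply, Pi.one_apply, mul_one, Pi.smul_apply,
      smul_eq_mul] at h
    exact_mod_cast h
  · have h := congrFun (congrFun hgram j) j'
    simp only [hZ, mul_apply, transpose_apply, map_apply, add_apply, smul_apply, one_apply,
      of_apply, smul_eq_mul] at h
    split_ifs at h ⊢ <;> simp only [mul_one, mul_zero, zero_add] at h <;> exact_mod_cast h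

theorem mulVec_eq_zero_of_mulVec_one_eq_zero {m n R : Type*} [Fintype n] [NonAssocSemiring R]
    [CharZero R] {E : Matrix m n R} {i : m} (h01 : ∀ l, E i l = 0 ∨ E i l = 1)
    (h : (E *ᵥ 1) i = 0) (x : n → R) : (E *ᵥ x) i = 0 := by
  have hrow : E i = 0 :=
    eq_zero_of_sum_eq_zero_of_zero_or_one h01 (by simpa [mulVec, dotProduct] using h)
  simp [mulVec, hrow]

section Selection

variable {m n R : Type*}

theorem exists_eq_one_submatrix_of_zero_or_one [Fintype m] [DecidableEq m] [DecidableEq n]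
    [NonAssocSemiring R] [CharZero R] {E : Matrix m n R} (h01 : ∀ i l, E i l = 0 ∨ E i l = 1)
    (hiso : Eᵀ * E = 1) : ∃ σ : n → m, E = (1 : Matrix m m R).submatrix id σ := by
  have hcol : ∀ l, ∃ i₀, (fun i => E i l) = Pi.single i₀ 1 := by
    intro l
    refine exists_eq_single_of_sum_eq_one (h01 · l) ?_
    have := congrFun (congrFun hiso l) l
    rw [mul_apply, one_apply_eq] at this
    rw [← this]
    refine Finset.sum_congr rfl fun i _ => ?_
    rcases h01 i l with h | h <;> simp [h]
  choose σ hσ using hcol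
  refine ⟨σ, ext fun i l => ?_⟩
  simpa [one_apply, Pi.single_apply] using congrFun (hσ l) i

theorem one_vecMul_one_submatrix [Fintype m] [DecidableEq m] [NonAssocSemiring R] (σ : n → m) :
    1 ᵥ* (1 : Matrix m m R).submatrix id σ = 1 := by
  funext l
  simp [vecMul, dotProduct, one_apply]

variable [CommSemiring R] [StarRing R]

theorem conjTranspose_one_submatrix_mul [Fintype m] [DecidableEq m] {p : Type*} (σ : n → m)
    (F : Matrix m p R) : ((1 : Matrix m m R).submatrix id σ)ᴴ * F = F.submatrix σ id := by
  ext l l'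
  simp [mul_apply, one_apply]

theorem one_submatrix_mul_diagonal_mul_conjTranspose [DecidableEq m] [Fintype n] [DecidableEq n]
    (σ : n → m) (w : n → R) :
    (1 : Matrix m m R).submatrix id σ * diagonal w * ((1 : Matrix m m R).submatrix id σ)ᴴ =
      diagonal ((1 : Matrix m m R).submatrix id σ *ᵥ w) := by
  ext i i'
  rw [mul_apply]
  simp only [mul_diagonal, conjTranspose_apply, submatrix_apply, id, one_apply, diagonal_apply,
    mulVec, dotProduct]
  split_ifs with h
  · subst h
    exact Finset.sum_congr rfl fun l _ => by split_ifs <;> simp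
  · exact Finset.sum_eq_zero fun l _ => by split_ifs <;> simp_all

end Selection

theorem one_sub_single_add_single {n R : Type*} [DecidableEq n] [CommRing R] {a b : n}
    (hab : a ≠ b) :
    (1 : Matrix n n R) - (single a b 1 + single b a 1) =
      diagonal 1 + diagonal (Pi.single a 1 + Pi.single b 1) -
        vecMulVec (Pi.single a 1 + Pi.single b 1) (Pi.single a 1 + Pi.single b 1) := by
  ext i i'
  simp only [sub_apply, add_apply, one_apply, diagonal_apply, vecMulVec_apply, single_apply,
    Pi.add_apply, Pi.single_apply, Pi.one_apply]
  grind

section Block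

variable {m n R : Type*} {E : Matrix m n R} {p : m → Prop} {r : n → Prop} [DecidablePred p]
  [DecidablePred r]

theorem indicator_vecMul_of_block [NonAssocSemiring R] [Fintype m]
    (hE : ∀ i l, ¬(p i ↔ r l) → E i l = 0) :
    (fun i => if p i then 1 else 0) ᵥ* E = fun l => if r l then (1 ᵥ* E) l else 0 := by
  funext l
  simp only [vecMul, dotProduct, Pi.one_apply, ite_mul, one_mul, zero_mul]
  split_ifs with hl
  · exact Finset.sum_congr rfl fun i _ => by
      split_ifs with hi
      · rfl
      · exact (hE i l (by tauto)).symm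
  · exact Finset.sum_eq_zero fun i _ => by
      split_ifs with hi
      · exact hE i l (by tauto)
      · rfl

theorem mulVec_indicator_of_block [NonAssocSemiring R] [Fintype n]
    (hE : ∀ i l, ¬(p i ↔ r l) → E i l = 0) :
    E *ᵥ (fun l => if r l then 1 else 0) = fun i => if p i then (E *ᵥ 1) i else 0 := by
  funext i
  simp only [mulVec, dotProduct, Pi.one_apply, mul_ite, mul_one, mul_zero]
  split_ifs with hi
  · exact Finset.sum_congr rfl fun l _ => by
      split_ifs with hl
      · rfl
      · exact (hE i l (by tauto)).symm
  · exact Finset.sum_eq_zero fun l _ => by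
      split_ifs with hl
      · exact hE i l (by tauto)
      · rfl

theorem sum_filter_mulVec_of_block [Semiring R] [Fintype m] [Fintype n]
    (hE : ∀ i l, ¬(p i ↔ r l) → E i l = 0) (x : n → R) :
    ∑ i ∈ univ.filter p, (E *ᵥ x) i = ∑ l ∈ univ.filter r, (1 ᵥ* E) l * x l := by
  calc ∑ i ∈ univ.filter p, (E *ᵥ x) i = (fun i => if p i then 1 else 0) ⬝ᵥ (E *ᵥ x) := by
        simp [dotProduct, Finset.sum_filter]
    _ = _ := by
      rw [dotProduct_mulVec, indicator_vecMul_of_block hE]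
      simp [dotProduct, Finset.sum_filter]

end Block

section InnerProduct

variable {m n p R : Type*} [CommSemiring R] [StarRing R]

theorem star_mulVec_dotProduct_mulVec [Fintype m] [Fintype n] [Fintype p] (E : Matrix m n R)
    (F : Matrix m p R) (x : n → R) (y : p → R) :
    star (E *ᵥ x) ⬝ᵥ (F *ᵥ y) = star x ⬝ᵥ ((Eᴴ * F) *ᵥ y) := by
  rw [star_mulVec, dotProduct_mulVec, vecMul_vecMul, ← dotProduct_mulVec]

theorem conjTranspose_eq_transpose_of_zero_or_one {E : Matrix m n R}
    (h01 : ∀ i l, E i l = 0 ∨ E i l = 1) : Eᴴ = Eᵀ := by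
  ext l i
  rcases h01 i l with h | h <;> simp [h]

theorem star_mulVec_dotProduct_mulVec_self [Fintype m] [Fintype n] [DecidableEq n]
    {E : Matrix m n R} (h01 : ∀ i l, E i l = 0 ∨ E i l = 1) (hiso : Eᵀ * E = 1) (x y : n → R) :
    star (E *ᵥ x) ⬝ᵥ (E *ᵥ y) = star x ⬝ᵥ y := by
  rw [star_mulVec_dotProduct_mulVec, conjTranspose_eq_transpose_of_zero_or_one h01, hiso,
    one_mulVec]

variable {𝕜 : Type*} [RCLike 𝕜]

/-- The columns of `E` are standard basis vectors, so `Eᴴ * F` is a `{0,1}`-matrix; `hone` says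
that the sum of its entries is `1`, so it has a single nonzero entry. -/
theorem norm_star_mulVec_dotProduct_mulVec_eq_one [Fintype m] [DecidableEq m] [Fintype n]
    [DecidableEq n] [Fintype p] [DecidableEq p]
    {E : Matrix m n 𝕜} {F : Matrix m p 𝕜} (hE01 : ∀ i l, E i l = 0 ∨ E i l = 1)
    (hiso : Eᵀ * E = 1) (hF01 : ∀ i l, F i l = 0 ∨ F i l = 1)
    (hone : star (E *ᵥ 1) ⬝ᵥ (F *ᵥ 1) = 1) {x : n → 𝕜} {y : p → 𝕜} (hx : ∀ a, ‖x a‖ = 1)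
    (hy : ∀ b, ‖y b‖ = 1) : ‖star (E *ᵥ x) ⬝ᵥ (F *ᵥ y)‖ = 1 := by
  obtain ⟨σ, hσ⟩ := exists_eq_one_submatrix_of_zero_or_one hE01 hiso
  have h01 : ∀ a b, (Eᴴ * F) a b = 0 ∨ (Eᴴ * F) a b = 1 := fun a b => by
    rw [hσ, conjTranspose_one_submatrix_mul]
    exact hF01 (σ a) b
  rw [star_mulVec_dotProduct_mulVec] at hone ⊢
  obtain ⟨⟨a, b⟩, hab⟩ := exists_eq_single_of_sum_eq_one (f := fun q : n × p => (Eᴴ * F) q.1 q.2)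
    (fun q => h01 q.1 q.2) (by simpa [Fintype.sum_prod_type, dotProduct, mulVec] using hone)
  have hG : Eᴴ * F = single a b 1 := by
    ext a' b'
    simpa [single_apply, Pi.single_apply, Prod.ext_iff, eq_comm] using congrFun hab (a', b')
  rw [hG, single_mulVec, one_mul, ← Pi.single, dotProduct_single]
  simp [hx, hy]

theorem norm_star_mulVec_dotProduct_mulVec_eq_one_of_family [Fintype m] [DecidableEq m]
    [Fintype n] [DecidableEq n] {κ : Type*} {E : κ → Matrix m n 𝕜}
    (h01 : ∀ j i l, E j i l = 0 ∨ E j i l = 1) (hiso : ∀ j, (E j)ᵀ * E j = 1)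
    (hmeet : ∀ j j', j ≠ j' → star (E j *ᵥ 1) ⬝ᵥ (E j' *ᵥ 1) = 1) {j j' : κ} {x y : n → 𝕜}
    (hx : ∀ a, ‖x a‖ = 1) (hy : ∀ b, ‖y b‖ = 1) (hxy : j = j' → ‖star x ⬝ᵥ y‖ = 1) :
    ‖star (E j *ᵥ x) ⬝ᵥ (E j' *ᵥ y)‖ = 1 := by
  rcases eq_or_ne j j' with rfl | hjj
  · rw [star_mulVec_dotProduct_mulVec_self (h01 j) (hiso j)]
    exact hxy rfl
  · exact norm_star_mulVec_dotProduct_mulVec_eq_one (h01 j) (hiso j) (h01 j') (hmeet j j' hjj) hx hy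

end InnerProduct

section Frame

variable {𝕜 : Type*} [RCLike 𝕜]

theorem sum_norm_sq_eq_trace {m n : Type*} [Fintype m] [Fintype n] (M : Matrix m n 𝕜) :
    ((∑ i, ∑ j, ‖M i j‖ ^ 2 : ℝ) : 𝕜) = (M * Mᴴ).trace := by
  simp [trace, mul_apply, ← RCLike.mul_conj]

theorem star_dotProduct_self_of_unimodular {n : Type*} [Fintype n] {v : n → 𝕜}
    (hv : ∀ m, ‖v m‖ = 1) : star v ⬝ᵥ v = Fintype.card n := by
  simp [dotProduct, RCLike.conj_mul, hv]

variable {ι n : Type*} [Fintype ι]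

def frameOperator (x : ι → n → 𝕜) : Matrix n n 𝕜 := ∑ l, vecMulVec (x l) (star (x l))

theorem frameOperator_apply (x : ι → n → 𝕜) (m m' : n) :
    frameOperator x m m' = ∑ l, x l m * conj (x l m') := by
  simp [frameOperator, sum_apply, vecMulVec_apply]

theorem frameOperator_eq_mul_conjTranspose [Fintype n] (x : ι → n → 𝕜) :
    frameOperator x = (of x)ᵀ * (of x)ᵀᴴ := by
  ext m m'
  simp [frameOperator_apply, mul_apply]

theorem frameOperator_mulVec [Fintype n] {p : Type*} (E : Matrix p n 𝕜)
    (x : ι → n → 𝕜) : frameOperator (fun l => E *ᵥ x l) = E * frameOperator x * Eᴴ := by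
  simp only [frameOperator, Matrix.mul_sum, Matrix.sum_mul, mul_vecMulVec, vecMulVec_mul,
    star_mulVec]

theorem sum_norm_sq_frameOperator [Fintype n] (x : ι → n → 𝕜) :
    ∑ m, ∑ m', ‖frameOperator x m m'‖ ^ 2 = ∑ l, ∑ l', ‖star (x l) ⬝ᵥ x l'‖ ^ 2 := by
  have hgram : ∀ l l', star (x l) ⬝ᵥ x l' = ((of x)ᵀᴴ * (of x)ᵀ) l l' := by
    intro l l'
    simp [mul_apply, dotProduct, mul_comm]
  simp_rw [hgram]
  apply RCLike.ofReal_injective (K := 𝕜)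
  rw [sum_norm_sq_eq_trace, sum_norm_sq_eq_trace, frameOperator_eq_mul_conjTranspose]
  generalize (of x)ᵀ = A
  simp only [conjTranspose_mul, conjTranspose_conjTranspose]
  rw [Matrix.mul_assoc, trace_mul_comm A]
  simp only [Matrix.mul_assoc]

theorem frameOperator_apply_self_of_unimodular {x : ι → n → 𝕜} (hu : ∀ l m, ‖x l m‖ = 1)
    (m : n) : frameOperator x m m = Fintype.card ι := by
  simp [frameOperator_apply, RCLike.mul_conj, hu]

theorem sum_norm_sq_frameOperator_of_equiangular [Fintype n] [DecidableEq ι] {x : ι → n → 𝕜}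
    (hu : ∀ l m, ‖x l m‖ = 1) (hang : ∀ l l', l ≠ l' → ‖star (x l) ⬝ᵥ x l'‖ = 1) :
    ∑ m, ∑ m', ‖frameOperator x m m'‖ ^ 2 =
      Fintype.card ι * ((Fintype.card n : ℝ) ^ 2 + Fintype.card ι - 1) := by
  rw [sum_norm_sq_frameOperator]
  have hrow : ∀ l, ∑ l', ‖star (x l) ⬝ᵥ x l'‖ ^ 2 =
      (Fintype.card n : ℝ) ^ 2 + Fintype.card ι - 1 := by
    intro l
    rw [← Finset.add_sum_erase _ _ (Finset.mem_univ l), star_dotProduct_self_of_unimodular (hu l),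
      Finset.sum_congr rfl fun l' hl' => by rw [hang l l' (Finset.ne_of_mem_erase hl').symm]]
    have hι : 1 ≤ Fintype.card ι := Fintype.card_pos_iff.2 ⟨l⟩
    simp [Finset.card_erase_of_mem, Nat.cast_sub hι]
    ring
  simp only [hrow, Finset.sum_const, Finset.card_univ, nsmul_eq_mul]

variable [Fintype n] [DecidableEq ι] [DecidableEq n] {x : ι → n → 𝕜}

theorem frameOperator_eq_smul_one_of_simplex (hu : ∀ l m, ‖x l m‖ = 1)
    (hang : ∀ l l', l ≠ l' → ‖star (x l) ⬝ᵥ x l'‖ = 1)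
    (hcard : Fintype.card ι = Fintype.card n + 1) :
    frameOperator x = (Fintype.card ι : 𝕜) • 1 := by
  have hoff : ∀ p ∉ (univ : Finset n).diag, frameOperator x p.1 p.2 = 0 := by
    refine Finset.eq_zero_of_sum_norm_sq_le (f := fun p : n × n => frameOperator x p.1 p.2) ?_
    rw [Fintype.sum_prod_type, sum_norm_sq_frameOperator_of_equiangular hu hang, Finset.sum_diag]
    simp only [frameOperator_apply_self_of_unimodular hu, RCLike.norm_natCast, Finset.sum_const,
      Finset.card_univ, hcard]
    apply le_of_eq
    push_cast
    ring
  ext m m'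
  by_cases h : m = m'
  · subst h
    simp [frameOperator_apply_self_of_unimodular hu]
  · simpa [h] using hoff (m, m') (by simp [h])

theorem frameOperator_eq_of_cosimplex (hu : ∀ l m, ‖x l m‖ = 1)
    (hang : ∀ l l', l ≠ l' → ‖star (x l) ⬝ᵥ x l'‖ = 1) {a b : n} (hab : a ≠ b)
    (hsum : ∀ l, x l a + x l b = 0) (hcard : Fintype.card ι + 1 = Fintype.card n) :
    frameOperator x = (Fintype.card ι : 𝕜) • (1 - (single a b 1 + single b a 1)) := by
  have hb : ∀ l, x l b = -x l a := fun l => eq_neg_of_add_eq_zero_right (hsum l)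
  have hxab : frameOperator x a b = -Fintype.card ι := by
    simp [frameOperator_apply, hb, RCLike.mul_conj, hu]
  have hxba : frameOperator x b a = -Fintype.card ι := by
    simp [frameOperator_apply, hb, RCLike.mul_conj, hu]
  have hoff : ∀ p ∉ (univ : Finset n).diag ∪ {(a, b), (b, a)}, frameOperator x p.1 p.2 = 0 := by
    refine Finset.eq_zero_of_sum_norm_sq_le (f := fun p : n × n => frameOperator x p.1 p.2) ?_
    rw [Fintype.sum_prod_type, sum_norm_sq_frameOperator_of_equiangular hu hang,
      Finset.sum_union (by simp [hab, hab.symm]), Finset.sum_diag,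
      Finset.sum_pair (by simp [hab])]
    simp only [frameOperator_apply_self_of_unimodular hu, hxab, hxba, norm_neg,
      RCLike.norm_natCast, Finset.sum_const, Finset.card_univ, ← hcard]
    apply le_of_eq
    push_cast
    ring
  ext m m'
  by_cases h : m = m'
  · subst h
    simp [frameOperator_apply_self_of_unimodular hu, single_apply,
      if_neg fun h : a = m ∧ b = m => hab (h.1.trans h.2.symm),
      if_neg fun h : b = m ∧ a = m => hab (h.2.trans h.1.symm)]
  by_cases hm : (m, m') = (a, b) ∨ (m, m') = (b, a)
  · rcases hm with hm | hm <;> obtain ⟨rfl, rfl⟩ := Prod.ext_iff.1 hm <;>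
      simp [hxab, hxba, hab, hab.symm]
  · simp only [Prod.ext_iff, not_or, not_and] at hm
    rw [hoff (m, m') (by simp [h]; tauto)]
    simp [single_apply, h, if_neg fun h' : b = m ∧ a = m' => hm.2 h'.1.symm h'.2.symm,
      if_neg fun h' : a = m ∧ b = m' => hm.1 h'.1.symm h'.2.symm]

end Frame

section FrameSelection

variable {ι m n 𝕜 : Type*} [RCLike 𝕜] [Fintype ι] [DecidableEq m] [Fintype n] [DecidableEq n]
  {E : Matrix m n 𝕜} {σ : n → m} {x : ι → n → 𝕜}

theorem frameOperator_one_submatrix_mulVec_of_eq_smul_one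
    (hE : E = (1 : Matrix m m 𝕜).submatrix id σ) {c : 𝕜} (hx : frameOperator x = c • 1) :
    frameOperator (fun l => E *ᵥ x l) = c • diagonal (E *ᵥ 1) := by
  rw [frameOperator_mulVec, hx, Matrix.mul_smul, Matrix.smul_mul, ← diagonal_one, hE,
    one_submatrix_mul_diagonal_mul_conjTranspose]
  rfl

theorem frameOperator_one_submatrix_mulVec_of_cosimplex
    (hE : E = (1 : Matrix m m 𝕜).submatrix id σ) {a b : n} (hab : a ≠ b) {c : 𝕜}
    (hx : frameOperator x = c • (1 - (single a b 1 + single b a 1))) :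
    frameOperator (fun l => E *ᵥ x l) =
      c • (diagonal (E *ᵥ 1) + diagonal (E *ᵥ (Pi.single a 1 + Pi.single b 1)) -
        vecMulVec (E *ᵥ (Pi.single a 1 + Pi.single b 1))
          (star (E *ᵥ (Pi.single a 1 + Pi.single b 1)))) := by
  have hu : star (Pi.single a 1 + Pi.single b 1 : n → 𝕜) = Pi.single a 1 + Pi.single b 1 := by
    simp [Pi.star_single]
  rw [frameOperator_mulVec, hx, Matrix.mul_smul, Matrix.smul_mul, one_sub_single_add_single hab,
    Matrix.mul_sub, Matrix.mul_add, Matrix.sub_mul, Matrix.add_mul, hE,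
    one_submatrix_mul_diagonal_mul_conjTranspose, one_submatrix_mul_diagonal_mul_conjTranspose,
    mul_vecMulVec, vecMulVec_mul, star_mulVec, hu]

end FrameSelection

end Matrix

section Incidence

variable {ι κ : Type*} {N : ι → κ → ℕ}

theorem sum_mul_rows_le_one [Fintype ι] [Fintype κ] (h01 : ∀ i j, N i j ≤ 1)
    (hpair : ∀ j j', j ≠ j' → ∑ i, N i j * N i j' ≤ 1) {i i' : ι} (hii' : i ≠ i') :
    ∑ j, N i j * N i' j ≤ 1 := by
  classical
  have hdisj : ∀ j j', j ≠ j' → (N i j * N i' j) * (N i j' * N i' j') = 0 := by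
    intro j j' hjj'
    have := (Finset.sum_le_sum_of_subset (f := fun k => N k j * N k j')
      (Finset.subset_univ {i, i'})).trans (hpair j j' hjj')
    rw [Finset.sum_pair hii'] at this
    calc _ = (N i j * N i j') * (N i' j * N i' j') := by ring
      _ = 0 := Nat.mul_eq_zero.2 (by omega)
  -- the common points `j` have pairwise orthogonal indicators, so their number `s` has `s² = s`
  have hsq : (∑ j, N i j * N i' j) ^ 2 = ∑ j, N i j * N i' j := by
    rw [sq, Finset.sum_mul_sum]
    refine Finset.sum_congr rfl fun j _ => ?_
    rw [Finset.sum_eq_single j (fun j' _ h => hdisj j j' (Ne.symm h)) (by simp)]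
    have := h01 i j
    have := h01 i' j
    interval_cases N i j <;> interval_cases N i' j <;> rfl
  nlinarith

/-- Each point of a line `i ∈ B` lies on exactly one other line of `B`, so the `#B - 1` other lines
of `B` meet `i` in `#B - 1` points altogether, and in at most one point each. -/
theorem sum_mul_rows_eq_one_of_mem [Fintype ι] [Fintype κ] [DecidableEq ι] (h01 : ∀ i j, N i j ≤ 1)
    (hpair : ∀ j j', j ≠ j' → ∑ i, N i j * N i j' ≤ 1) {B : Finset ι}
    (hrow : ∀ i ∈ B, ∑ j, N i j + 1 = #B) (htwo : ∀ j, ∑ i ∈ B, N i j = 0 ∨ ∑ i ∈ B, N i j = 2)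
    {i i' : ι} (hi : i ∈ B) (hi' : i' ∈ B) (hii' : i ≠ i') : ∑ j, N i j * N i' j = 1 := by
  have hcount : ∑ i' ∈ B.erase i, ∑ j, N i j * N i' j = ∑ i' ∈ B.erase i, 1 := by
    have hj : ∀ j, N i j * ∑ i' ∈ B.erase i, N i' j = N i j := by
      intro j
      have hsplit := Finset.add_sum_erase B (fun i' => N i' j) hi
      rcases Nat.le_one_iff_eq_zero_or_eq_one.1 (h01 i j) with h | h
      · simp [h]
      · rw [h] at hsplit ⊢
        rcases htwo j with h2 | h2 <;> omega
    rw [Finset.sum_comm]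
    simp_rw [← Finset.mul_sum, hj]
    have := hrow i hi
    rw [Finset.sum_const, Finset.card_erase_of_mem hi, smul_eq_mul, mul_one]
    omega
  exact (Finset.sum_eq_sum_iff_of_le fun i'' hi'' =>
    sum_mul_rows_le_one h01 hpair (Finset.ne_of_mem_erase hi'').symm).1 hcount i'
    (Finset.mem_erase.2 ⟨hii'.symm, hi'⟩)

theorem sum_sq_sum_eq_of_pairwise [Fintype ι] {P : Finset κ} {T : Finset ι} {q : ℕ}
    (h01 : ∀ i j, N i j ≤ 1) (hcol : ∀ j ∈ P, ∑ i, N i j = q + 1)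
    (hpair : ∀ j ∈ P, ∀ j' ∈ P, j ≠ j' → ∑ i, N i j * N i j' = 1)
    (hT : ∀ j ∈ P, ∀ i ∉ T, N i j = 0) :
    ∑ i ∈ T, (∑ j ∈ P, N i j) ^ 2 = #P * (q + #P) := by
  classical
  simp_rw [sq, Finset.sum_mul_sum]
  rw [Finset.sum_comm]
  refine (Finset.sum_congr rfl fun j hj => ?_).trans (Finset.sum_const _)
  have hinner : ∀ j' ∈ P, ∑ i ∈ T, N i j * N i j' = if j' = j then q + 1 else 1 := by
    intro j' hj'
    rw [Finset.sum_subset (Finset.subset_univ T) fun i _ hi => by simp [hT j hj i hi]]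
    split_ifs with h
    · subst h
      rw [← hcol j' hj]
      refine Finset.sum_congr rfl fun i _ => ?_
      rcases Nat.le_one_iff_eq_zero_or_eq_one.1 (h01 i j') with h | h <;> simp [h]
    · exact hpair j hj j' hj' (Ne.symm h)
  rw [Finset.sum_comm, Finset.sum_congr rfl hinner, ← Finset.add_sum_erase P _ hj, if_pos rfl,
    Finset.sum_congr rfl fun j' hj' => if_neg (Finset.ne_of_mem_erase hj')]
  simp only [Finset.sum_const, Finset.card_erase_of_mem hj, smul_eq_mul, mul_one]
  have : 1 ≤ #P := Finset.card_pos.2 ⟨j, hj⟩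
  omega

/-- With `D i = ∑ j ∈ P, N i j`, double counting gives `∑ D = #P (q + 1)` and
`∑ D² = #P (q + #P)` over `T`, and these make `∑ (2 D - q)²` vanish. -/
theorem two_mul_sum_eq_of_pairwise [Fintype ι] {P : Finset κ} {T : Finset ι} {q : ℕ}
    (h01 : ∀ i j, N i j ≤ 1)
    (hcol : ∀ j ∈ P, ∑ i, N i j = q + 1)
    (hpair : ∀ j ∈ P, ∀ j' ∈ P, j ≠ j' → ∑ i, N i j * N i j' = 1)
    (hT : ∀ j ∈ P, ∀ i ∉ T, N i j = 0) (hP : 2 * #P + q = q ^ 2) (hTcard : #T + 1 = q ^ 2) :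
    ∀ i ∈ T, 2 * ∑ j ∈ P, N i j = q := by
  have hsum : ∑ i ∈ T, ∑ j ∈ P, N i j = #P * (q + 1) := by
    rw [Finset.sum_comm, Finset.sum_congr rfl fun j hj =>
      (Finset.sum_subset (Finset.subset_univ T) fun i _ hi => hT j hj i hi).trans (hcol j hj)]
    simp
  have hsq := sum_sq_sum_eq_of_pairwise h01 hcol hpair hT
  have hvar : ∑ i ∈ T, (2 * (∑ j ∈ P, N i j : ℤ) - q) ^ 2 = 0 := by
    have hexp : ∀ i, (2 * (∑ j ∈ P, N i j : ℤ) - q) ^ 2 =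
        4 * (∑ j ∈ P, N i j : ℤ) ^ 2 - 4 * q * (∑ j ∈ P, N i j : ℤ) + q ^ 2 := fun i => by ring
    simp only [hexp, Finset.sum_add_distrib, Finset.sum_sub_distrib, ← Finset.mul_sum,
      Finset.sum_const, nsmul_eq_mul]
    have hsum' : (∑ i ∈ T, ∑ j ∈ P, N i j : ℤ) = #P * (q + 1) := by exact_mod_cast hsum
    have hsq' : (∑ i ∈ T, (∑ j ∈ P, N i j : ℤ) ^ 2) = #P * (q + #P) := by exact_mod_cast hsq
    have hP' : (2 * #P + q : ℤ) = q ^ 2 := by exact_mod_cast hP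
    have hT' : (#T + 1 : ℤ) = q ^ 2 := by exact_mod_cast hTcard
    rw [hsum', hsq']
    linear_combination (2 * (#P : ℤ) + q ^ 2 - q - 2 * q ^ 2) * hP' + (q : ℤ) ^ 2 * hT'
  intro i hi
  have := (Finset.sum_eq_zero_iff_of_nonneg (fun i _ => sq_nonneg _)).1 hvar i hi
  have : 2 * ∑ j ∈ P, (N i j : ℤ) = q := by linarith [pow_eq_zero_iff two_ne_zero |>.1 this]
  exact_mod_cast this

theorem sum_diagonal_sub_vecMulVec_of_incidence [DecidableEq ι] [Fintype κ] [DecidableEq κ]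
    {p : ι → Prop} [DecidablePred p] {P : Finset κ} (h01 : ∀ i j, N i j ≤ 1)
    (hP : ∀ j ∈ P, ∀ i, p i → N i j = 0)
    (hmeet : ∀ i i', p i → p i' → i ≠ i' → ∑ j, N i j * N i' j = 1) :
    ∑ j ∈ Pᶜ, (diagonal (fun i => if p i then (N i j : ℂ) else 0) -
      vecMulVec (fun i => if p i then (N i j : ℂ) else 0)
        (star fun i => if p i then (N i j : ℂ) else 0)) =
      diagonal (fun i => if p i then 1 else 0) -
        vecMulVec (fun i => if p i then 1 else 0) (fun i => if p i then 1 else 0) := by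
  ext i i'
  simp only [Matrix.sum_apply, Matrix.sub_apply, diagonal_apply, vecMulVec_apply, Pi.star_apply]
  by_cases hii : i = i'
  · subst hii
    refine (Finset.sum_eq_zero fun j _ => ?_).trans (by by_cases hp : p i <;> simp [hp])
    rcases Nat.le_one_iff_eq_zero_or_eq_one.1 (h01 i j) with h | h <;> by_cases hp : p i <;>
      simp [h, hp]
  · by_cases hp : p i <;> by_cases hp' : p i' <;> simp [hp, hp', hii]
    have hPc : ∑ j ∈ Pᶜ, N i j * N i' j = 1 := by
      rw [← hmeet i i' hp hp' hii, ← Finset.sum_add_sum_compl P,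
        Finset.sum_eq_zero (s := P) fun j hj => by rw [hP j hj i hp, zero_mul], zero_add]
    exact_mod_cast hPc

theorem diagonal_sum_of_incidence [DecidableEq ι] [Fintype κ] [DecidableEq κ] {q : ℕ}
    {p : ι → Prop} [DecidablePred p] {P : Finset κ} (hrow : ∀ i, ∑ j, N i j = q)
    (hP : ∀ j ∈ P, ∀ i, p i → N i j = 0) (hhalf : ∀ i, ¬p i → 2 * ∑ j ∈ P, N i j = q) :
    ((q : ℂ) + 2) • ∑ j ∈ P, diagonal (fun i => (N i j : ℂ)) +
      (q : ℂ) • ∑ j ∈ Pᶜ, diagonal (fun i => (N i j : ℂ)) =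
      diagonal fun i => (q : ℂ) * (q + 1) - q * if p i then 1 else 0 := by
  ext i i'
  simp only [Matrix.add_apply, Matrix.smul_apply, Matrix.sum_apply, diagonal_apply, smul_eq_mul]
  split_ifs with hii hp
  · have hA : ∑ j ∈ P, N i j = 0 := Finset.sum_eq_zero fun j hj => hP j hj i hp
    have hB : ∑ j ∈ Pᶜ, N i j = q := by rw [← hrow i, ← Finset.sum_add_sum_compl P, hA, zero_add]
    have hA' : ∑ j ∈ P, (N i j : ℂ) = 0 := by exact_mod_cast hA
    have hB' : ∑ j ∈ Pᶜ, (N i j : ℂ) = q := by exact_mod_cast hB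
    rw [hA', hB']
    ring
  · have ha : 2 * (∑ j ∈ P, (N i j : ℂ)) = q := by exact_mod_cast hhalf i hp
    have hb : (∑ j ∈ P, (N i j : ℂ)) + ∑ j ∈ Pᶜ, (N i j : ℂ) = q := by
      exact_mod_cast (Finset.sum_add_sum_compl P _).trans (hrow i)
    linear_combination (q : ℂ) * hb + ha
  · simp

theorem frame_identity_of_incidence [DecidableEq ι] [Fintype κ] [DecidableEq κ] {q : ℕ}
    {p : ι → Prop} [DecidablePred p] {P : Finset κ} (h01 : ∀ i j, N i j ≤ 1)
    (hrow : ∀ i, ∑ j, N i j = q) (hP : ∀ j ∈ P, ∀ i, p i → N i j = 0)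
    (hhalf : ∀ i, ¬p i → 2 * ∑ j ∈ P, N i j = q)
    (hmeet : ∀ i i', p i → p i' → i ≠ i' → ∑ j, N i j * N i' j = 1) :
    ((q : ℂ) + 2) • ∑ j ∈ P, diagonal (fun i => (N i j : ℂ)) +
      (q : ℂ) • ∑ j ∈ Pᶜ, (diagonal (fun i => (N i j : ℂ)) +
        diagonal (fun i => if p i then (N i j : ℂ) else 0) -
          vecMulVec (fun i => if p i then (N i j : ℂ) else 0)
            (star fun i => if p i then (N i j : ℂ) else 0)) =
      ((q : ℂ) * ((q : ℂ) + 1)) • (1 - ((q : ℂ) + 1)⁻¹ •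
        vecMulVec (fun i => if p i then 1 else 0) (fun i => if p i then 1 else 0)) := by
  simp only [add_sub_assoc, Finset.sum_add_distrib, smul_add, ← add_assoc]
  rw [diagonal_sum_of_incidence hrow hP hhalf, sum_diagonal_sub_vecMulVec_of_incidence h01 hP hmeet]
  have hq : (q : ℂ) + 1 ≠ 0 := by exact_mod_cast q.succ_ne_zero
  ext i i'
  simp only [Matrix.add_apply, Matrix.smul_apply, Matrix.sub_apply, diagonal_apply,
    vecMulVec_apply, one_apply, smul_eq_mul]
  split_ifs <;> field_simp <;> ring

end Incidence

theorem Fin.card_filter_le_val {n m : ℕ} : #{i : Fin n | m ≤ (i : ℕ)} = n - m := by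
  have := Finset.card_filter_add_card_filter_not (s := (univ : Finset (Fin n)))
    (p := fun i => (i : ℕ) < m)
  simp only [not_lt, Fin.card_filter_val_lt, card_univ, Fintype.card_fin] at this
  omega

/-! Rows are lines and columns are points, indexed from `0`: the bottom lines are the rows
`i ≥ q ^ 2 - 1` and the interior points, which avoid them, are the columns `j < q * (q - 1) / 2`. -/

section Hyperoval

variable {q : ℕ}

theorem Fin.filter_sub_one_le_eq_pair (hq : 1 ≤ q) :
    (univ.filter fun l : Fin (q + 1) => q - 1 ≤ (l : ℕ)) =
      {⟨q - 1, Nat.sub_lt_succ q 1⟩, ⟨q, Nat.lt_succ_self q⟩} := by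
  ext l
  simp only [Finset.mem_filter, Finset.mem_univ, true_and, Finset.mem_insert,
    Finset.mem_singleton, Fin.ext_iff]
  omega

theorem Fin.indicator_sub_one_le {R : Type*} [AddMonoidWithOne R] (hq : 1 ≤ q) :
    (fun l : Fin (q + 1) => if q - 1 ≤ (l : ℕ) then (1 : R) else 0) =
      Pi.single ⟨q - 1, Nat.sub_lt_succ q 1⟩ 1 + Pi.single ⟨q, Nat.lt_succ_self q⟩ 1 := by
  funext l
  have := l.isLt
  simp only [Pi.add_apply, Pi.single_apply, Fin.ext_iff]
  split_ifs <;> first | (exfalso; omega) | simp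

theorem sum_bottom_mulVec_of_block {R : Type*} [Semiring R] [CharZero R]
    {E : Matrix (Fin (q * (q + 1))) (Fin (q + 1)) R} (h01 : ∀ i l, E i l = 0 ∨ E i l = 1)
    (hiso : Eᵀ * E = 1) (hq : 1 ≤ q)
    (hblock : ∀ (i : Fin (q * (q + 1))) (l : Fin (q + 1)),
      (q ^ 2 - 1 ≤ (i : ℕ) ∧ (l : ℕ) < q - 1) ∨ ((i : ℕ) < q ^ 2 - 1 ∧ q - 1 ≤ (l : ℕ)) →
        E i l = 0) (x : Fin (q + 1) → R) :
    ∑ i ∈ univ.filter (fun i : Fin (q * (q + 1)) => q ^ 2 - 1 ≤ (i : ℕ)), (E *ᵥ x) i =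
      x ⟨q - 1, Nat.sub_lt_succ q 1⟩ + x ⟨q, Nat.lt_succ_self q⟩ := by
  obtain ⟨σ, hσ⟩ := exists_eq_one_submatrix_of_zero_or_one h01 hiso
  rw [sum_filter_mulVec_of_block (r := fun l : Fin (q + 1) => q - 1 ≤ (l : ℕ))
      (fun i l h => hblock i l (by omega)), hσ,
    one_vecMul_one_submatrix, Fin.filter_sub_one_le_eq_pair hq,
    sum_pair (by simp only [ne_eq, Fin.ext_iff]; omega)]
  simp

theorem mulVec_bottom_of_block {R : Type*} [NonAssocSemiring R]
    {E : Matrix (Fin (q * (q + 1))) (Fin (q + 1)) R} (hq : 1 ≤ q)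
    (hblock : ∀ (i : Fin (q * (q + 1))) (l : Fin (q + 1)),
      (q ^ 2 - 1 ≤ (i : ℕ) ∧ (l : ℕ) < q - 1) ∨ ((i : ℕ) < q ^ 2 - 1 ∧ q - 1 ≤ (l : ℕ)) →
        E i l = 0) :
    E *ᵥ (Pi.single ⟨q - 1, Nat.sub_lt_succ q 1⟩ 1 + Pi.single ⟨q, Nat.lt_succ_self q⟩ 1) =
      fun i : Fin (q * (q + 1)) => if q ^ 2 - 1 ≤ (i : ℕ) then (E *ᵥ 1) i else 0 := by
  rw [← Fin.indicator_sub_one_le hq, mulVec_indicator_of_block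
    (p := fun i : Fin (q * (q + 1)) => q ^ 2 - 1 ≤ (i : ℕ))
    (r := fun l : Fin (q + 1) => q - 1 ≤ (l : ℕ)) fun i l h => hblock i l (by omega)]

variable {N : Matrix (Fin (q * (q + 1))) (Fin (q ^ 2)) ℕ}

theorem sum_mul_bottom_rows_eq_one (hq : 1 ≤ q) (h01 : ∀ i j, N i j ≤ 1)
    (hrow : ∀ i, ∑ j, N i j = q)
    (hgram : ∀ j j', ∑ i, N i j * N i j' = if j = j' then q + 1 else 1)
    (htwo : ∀ j, ∑ i ∈ univ.filter (fun i : Fin (q * (q + 1)) => q ^ 2 - 1 ≤ (i : ℕ)), N i j = 0 ∨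
      ∑ i ∈ univ.filter (fun i : Fin (q * (q + 1)) => q ^ 2 - 1 ≤ (i : ℕ)), N i j = 2)
    {i i' : Fin (q * (q + 1))} (hi : q ^ 2 - 1 ≤ (i : ℕ)) (hi' : q ^ 2 - 1 ≤ (i' : ℕ))
    (hii' : i ≠ i') : ∑ j, N i j * N i' j = 1 := by
  have hqq : q ^ 2 + q = q * (q + 1) := by ring
  have hq1 : 1 ≤ q ^ 2 := Nat.one_le_pow _ _ hq
  refine sum_mul_rows_eq_one_of_mem h01 (fun j j' h => (hgram j j').trans_le (by simp [h]))
    (fun i _ => ?_) htwo (by simpa using hi) (by simpa using hi') hii'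
  rw [hrow, Fin.card_filter_le_val]
  omega

theorem two_mul_sum_interior_eq (hq : 1 ≤ q) (h01 : ∀ i j, N i j ≤ 1)
    (hgram : ∀ j j', ∑ i, N i j * N i j' = if j = j' then q + 1 else 1)
    (hblock : ∀ (i : Fin (q * (q + 1))) (j : Fin (q ^ 2)), (j : ℕ) < q * (q - 1) / 2 →
      q ^ 2 - 1 ≤ (i : ℕ) → N i j = 0)
    {i : Fin (q * (q + 1))} (hi : ¬q ^ 2 - 1 ≤ (i : ℕ)) :
    2 * ∑ j ∈ univ.filter (fun j : Fin (q ^ 2) => (j : ℕ) < q * (q - 1) / 2), N i j = q := by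
  have hqq : q ^ 2 + q = q * (q + 1) := by ring
  have hq2 : q ^ 2 = q * q := sq q
  have hcol : ∀ j, ∑ i, N i j = q + 1 := fun j => by
    refine (sum_congr rfl fun i _ => ?_).trans ((hgram j j).trans (if_pos rfl))
    rcases Nat.le_one_iff_eq_zero_or_eq_one.1 (h01 i j) with h | h <;> simp [h]
  refine two_mul_sum_eq_of_pairwise
    (T := univ.filter fun i : Fin (q * (q + 1)) => (i : ℕ) < q ^ 2 - 1) h01 (fun j _ => hcol j)
    (fun j _ j' _ h => (hgram j j').trans (if_neg h))
    (fun j hj i hi => hblock i j (mem_filter.1 hj).2 (by simpa using hi)) ?_ ?_ i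
    (by simp only [mem_filter, mem_univ, true_and]; omega)
  · have h2 := Nat.two_mul_div_two_of_even (Nat.even_mul_pred_self q)
    have h3 := Nat.mul_sub_one q q
    have h4 := Nat.le_mul_self q
    rw [Fin.card_filter_val_lt]
    omega
  · have hq1 : 1 ≤ q ^ 2 := Nat.one_le_pow _ _ hq
    rw [Fin.card_filter_val_lt]
    omega

theorem finrank_ker_sum_bottom_proj (hq : 1 ≤ q) :
    Module.finrank ℂ
        ↥(LinearMap.ker
          (∑ i ∈ univ.filter (fun i : Fin (q * (q + 1)) => q ^ 2 - 1 ≤ (i : ℕ)),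
            (LinearMap.proj i : (Fin (q * (q + 1)) → ℂ) →ₗ[ℂ] ℂ))) = q ^ 2 + q - 1 := by
  have hqq : q ^ 2 + q = q * (q + 1) := by ring
  have hq1 : 1 ≤ q ^ 2 := Nat.one_le_pow _ _ hq
  have := finrank_ker_sum_proj_add_one (K := ℂ)
    (s := univ.filter fun i : Fin (q * (q + 1)) => q ^ 2 - 1 ≤ (i : ℕ))
    ⟨⟨q ^ 2 - 1, by omega⟩, mem_filter.2 ⟨mem_univ _, le_rfl⟩⟩
  rw [Fintype.card_fin] at this
  omega

variable {E : Fin (q ^ 2) → Matrix (Fin (q * (q + 1))) (Fin (q + 1)) ℂ}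

theorem sum_bottom_rows_eq_zero_or_two (hq : 1 ≤ q) (hE01 : ∀ j i l, E j i l = 0 ∨ E j i l = 1)
    (hEiso : ∀ j, (E j)ᵀ * E j = 1) (hcol : ∀ j, E j *ᵥ 1 = fun i => (N i j : ℂ))
    (hEblock : ∀ j : Fin (q ^ 2), q * (q - 1) / 2 ≤ (j : ℕ) →
      ∀ (i : Fin (q * (q + 1))) (l : Fin (q + 1)),
        ((q ^ 2 - 1 ≤ (i : ℕ) ∧ (l : ℕ) < q - 1) ∨
          ((i : ℕ) < q ^ 2 - 1 ∧ q - 1 ≤ (l : ℕ))) → E j i l = 0)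
    (hblock : ∀ (i : Fin (q * (q + 1))) (j : Fin (q ^ 2)), (j : ℕ) < q * (q - 1) / 2 →
      q ^ 2 - 1 ≤ (i : ℕ) → N i j = 0) (j : Fin (q ^ 2)) :
    ∑ i ∈ univ.filter (fun i : Fin (q * (q + 1)) => q ^ 2 - 1 ≤ (i : ℕ)), N i j = 0 ∨
      ∑ i ∈ univ.filter (fun i : Fin (q * (q + 1)) => q ^ 2 - 1 ≤ (i : ℕ)), N i j = 2 := by
  by_cases hj : (j : ℕ) < q * (q - 1) / 2
  · exact Or.inl (sum_eq_zero fun i hi => hblock i j hj (mem_filter.1 hi).2)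
  · have := sum_bottom_mulVec_of_block (hE01 j) (hEiso j) hq (hEblock j (by omega)) 1
    simp only [hcol, Pi.one_apply, one_add_one_eq_two] at this
    exact Or.inr (by exact_mod_cast this)

theorem sum_frameOperator_hyperoval {s : Fin (q + 2) → Fin (q + 1) → ℂ}
    {c : Fin q → Fin (q + 1) → ℂ} (hq : 1 ≤ q) (h01 : ∀ i j, N i j ≤ 1)
    (hrow : ∀ i, ∑ j, N i j = q)
    (hgram : ∀ j j', ∑ i, N i j * N i j' = if j = j' then q + 1 else 1)
    (hblock : ∀ (i : Fin (q * (q + 1))) (j : Fin (q ^ 2)), (j : ℕ) < q * (q - 1) / 2 →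
      q ^ 2 - 1 ≤ (i : ℕ) → N i j = 0)
    (hE01 : ∀ j i l, E j i l = 0 ∨ E j i l = 1) (hEiso : ∀ j, (E j)ᵀ * E j = 1)
    (hcol : ∀ j, E j *ᵥ 1 = fun i => (N i j : ℂ))
    (hEblock : ∀ j : Fin (q ^ 2), q * (q - 1) / 2 ≤ (j : ℕ) →
      ∀ (i : Fin (q * (q + 1))) (l : Fin (q + 1)),
        ((q ^ 2 - 1 ≤ (i : ℕ) ∧ (l : ℕ) < q - 1) ∨
          ((i : ℕ) < q ^ 2 - 1 ∧ q - 1 ≤ (l : ℕ))) → E j i l = 0)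
    (hS : frameOperator s = ((q : ℂ) + 2) • 1)
    (hC : frameOperator c = (q : ℂ) • (1 - (single ⟨q - 1, Nat.sub_lt_succ q 1⟩
      ⟨q, Nat.lt_succ_self q⟩ 1 + single ⟨q, Nat.lt_succ_self q⟩ ⟨q - 1, Nat.sub_lt_succ q 1⟩ 1))) :
    (∑ j ∈ univ.filter (fun j : Fin (q ^ 2) => (j : ℕ) < q * (q - 1) / 2),
        ∑ l : Fin (q + 2), vecMulVec (E j *ᵥ s l) (star (E j *ᵥ s l))) +
      (∑ j ∈ univ.filter (fun j : Fin (q ^ 2) => q * (q - 1) / 2 ≤ (j : ℕ)),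
        ∑ l : Fin q, vecMulVec (E j *ᵥ c l) (star (E j *ᵥ c l)))
      = ((q : ℂ) * ((q : ℂ) + 1)) •
        ((1 : Matrix (Fin (q * (q + 1))) (Fin (q * (q + 1))) ℂ) -
          ((q : ℂ) + 1)⁻¹ •
            vecMulVec (fun i : Fin (q * (q + 1)) => if q ^ 2 - 1 ≤ (i : ℕ) then 1 else 0)
              (fun i : Fin (q * (q + 1)) => if q ^ 2 - 1 ≤ (i : ℕ) then 1 else 0)) := by
  choose σ hσ using fun j => exists_eq_one_submatrix_of_zero_or_one (hE01 j) (hEiso j)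
  have hJ : univ.filter (fun j : Fin (q ^ 2) => q * (q - 1) / 2 ≤ (j : ℕ)) =
      (univ.filter fun j : Fin (q ^ 2) => (j : ℕ) < q * (q - 1) / 2)ᶜ := by
    ext
    simp
  change ∑ j ∈ _, frameOperator (fun l => E j *ᵥ s l) +
    ∑ j ∈ _, frameOperator (fun l => E j *ᵥ c l) = _
  rw [sum_congr rfl fun j _ => frameOperator_one_submatrix_mulVec_of_eq_smul_one (hσ j) hS,
    sum_congr (s₁ := univ.filter fun j : Fin (q ^ 2) => q * (q - 1) / 2 ≤ (j : ℕ)) rfl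
      fun j hj => (frameOperator_one_submatrix_mulVec_of_cosimplex (hσ j)
        (by simp only [ne_eq, Fin.ext_iff]; omega) hC).trans
        (by rw [mulVec_bottom_of_block hq (hEblock j (mem_filter.1 hj).2)]),
    hJ, ← smul_sum, ← smul_sum]
  simp only [hcol]
  exact frame_identity_of_incidence h01 hrow (fun j hj i hi => hblock i j (mem_filter.1 hj).2 hi)
    (fun i hi => two_mul_sum_interior_eq hq h01 hgram hblock hi)
    (fun i i' hi hi' hii => sum_mul_bottom_rows_eq_one hq h01 hrow hgram
      (sum_bottom_rows_eq_zero_or_two hq hE01 hEiso hcol hEblock hblock) hi hi' hii)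

end Hyperoval

/-- The main construction: ETFs from hyperovals. Let `Z` be the incidence matrix of an
affine plane of order `q` whose bottom-left `(q+1) × (q(q−1)/2)` block vanishes (the form
arising from a hyperoval), let `E j` be embeddings for the columns of `Z`, aligned with
the block structure for `j > q(q−1)/2`, let `s` be a unimodular simplex and `c` a
unimodular cosimplex in `ℂ^{q+1}`. Then the `q(q²+q−1)` vectors `E j *ᵥ s l`
(`j ≤ q(q−1)/2`) and `E j *ᵥ c l` (`j > q(q−1)/2`) all lie in the `(q²+q−1)`-dimensional
subspace `H` of vectors whose last `q+1` coordinates sum to zero, have squared norm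
`q+1`, pairwise inner products of modulus `1`, and their rank-one outer products sum to
`q(q+1)` times the orthogonal projection onto `H`: they form an equiangular tight frame
for `H`. -/
theorem etf_from_hyperoval (q : ℕ) (hq : 2 ≤ q)
    (Z : Matrix (Fin (q * (q + 1))) (Fin (q ^ 2)) ℂ)
    (hZ01 : ∀ i j, Z i j = 0 ∨ Z i j = 1)
    (hZrow : Z *ᵥ 1 = (q : ℂ) • 1)
    (hZgram : Zᵀ * Z = (q : ℂ) • 1 + Matrix.of fun _ _ => 1)
    (hZblock : ∀ (i : Fin (q * (q + 1))) (j : Fin (q ^ 2)),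
      (j : ℕ) < q * (q - 1) / 2 → q ^ 2 - 1 ≤ (i : ℕ) → Z i j = 0)
    (E : Fin (q ^ 2) → Matrix (Fin (q * (q + 1))) (Fin (q + 1)) ℂ)
    (hE01 : ∀ j i l, E j i l = 0 ∨ E j i l = 1)
    (hEiso : ∀ j, (E j)ᵀ * E j = 1)
    (hEcol : ∀ j i, (E j *ᵥ 1) i = Z i j)
    (hEblock : ∀ j : Fin (q ^ 2), q * (q - 1) / 2 ≤ (j : ℕ) →
      ∀ (i : Fin (q * (q + 1))) (l : Fin (q + 1)),
        ((q ^ 2 - 1 ≤ (i : ℕ) ∧ (l : ℕ) < q - 1) ∨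
          ((i : ℕ) < q ^ 2 - 1 ∧ q - 1 ≤ (l : ℕ))) → E j i l = 0)
    (s : Fin (q + 2) → Fin (q + 1) → ℂ)
    (hs_unimod : ∀ l i, ‖s l i‖ = 1)
    (hs_ang : ∀ l l', l ≠ l' → ‖star (s l) ⬝ᵥ s l'‖ = 1)
    (c : Fin q → Fin (q + 1) → ℂ)
    (hc_unimod : ∀ l i, ‖c l i‖ = 1)
    (hc_sum : ∀ l, c l ⟨q - 1, by omega⟩ + c l ⟨q, by omega⟩ = 0)
    (hc_ang : ∀ l l', l ≠ l' → ‖star (c l) ⬝ᵥ c l'‖ = 1) :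
    -- the subspace `H` has dimension `q² + q − 1`
    (Module.finrank ℂ
        ↥(LinearMap.ker
          (∑ i ∈ Finset.univ.filter (fun i : Fin (q * (q + 1)) => q ^ 2 - 1 ≤ (i : ℕ)),
            (LinearMap.proj i : (Fin (q * (q + 1)) → ℂ) →ₗ[ℂ] ℂ))) = q ^ 2 + q - 1) ∧
    -- every vector of the family lies in `H`
    (∀ j : Fin (q ^ 2), (j : ℕ) < q * (q - 1) / 2 → ∀ l : Fin (q + 2),
        (∑ i ∈ Finset.univ.filter (fun i : Fin (q * (q + 1)) => q ^ 2 - 1 ≤ (i : ℕ)),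
          (E j *ᵥ s l) i) = 0) ∧
    (∀ j : Fin (q ^ 2), q * (q - 1) / 2 ≤ (j : ℕ) → ∀ l : Fin q,
        (∑ i ∈ Finset.univ.filter (fun i : Fin (q * (q + 1)) => q ^ 2 - 1 ≤ (i : ℕ)),
          (E j *ᵥ c l) i) = 0) ∧
    -- every vector of the family has squared norm `q + 1`
    (∀ (j : Fin (q ^ 2)) (l : Fin (q + 2)), (j : ℕ) < q * (q - 1) / 2 →
        star (E j *ᵥ s l) ⬝ᵥ (E j *ᵥ s l) = (q : ℂ) + 1) ∧
    (∀ (j : Fin (q ^ 2)) (l : Fin q), q * (q - 1) / 2 ≤ (j : ℕ) →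
        star (E j *ᵥ c l) ⬝ᵥ (E j *ᵥ c l) = (q : ℂ) + 1) ∧
    -- any two distinct vectors of the family have inner product of modulus `1`
    (∀ (j j' : Fin (q ^ 2)) (l l' : Fin (q + 2)),
        (j : ℕ) < q * (q - 1) / 2 → (j' : ℕ) < q * (q - 1) / 2 → (j, l) ≠ (j', l') →
        ‖star (E j *ᵥ s l) ⬝ᵥ (E j' *ᵥ s l')‖ = 1) ∧
    (∀ (j j' : Fin (q ^ 2)) (l : Fin (q + 2)) (l' : Fin q),
        (j : ℕ) < q * (q - 1) / 2 → q * (q - 1) / 2 ≤ (j' : ℕ) →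
        ‖star (E j *ᵥ s l) ⬝ᵥ (E j' *ᵥ c l')‖ = 1) ∧
    (∀ (j j' : Fin (q ^ 2)) (l l' : Fin q),
        q * (q - 1) / 2 ≤ (j : ℕ) → q * (q - 1) / 2 ≤ (j' : ℕ) → (j, l) ≠ (j', l') →
        ‖star (E j *ᵥ c l) ⬝ᵥ (E j' *ᵥ c l')‖ = 1) ∧
    -- the sum of the rank-one outer products is `q(q+1)` times the orthogonal
    -- projection onto `H`
    ((∑ j ∈ Finset.univ.filter (fun j : Fin (q ^ 2) => (j : ℕ) < q * (q - 1) / 2),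
        ∑ l : Fin (q + 2), vecMulVec (E j *ᵥ s l) (star (E j *ᵥ s l))) +
      (∑ j ∈ Finset.univ.filter (fun j : Fin (q ^ 2) => q * (q - 1) / 2 ≤ (j : ℕ)),
        ∑ l : Fin q, vecMulVec (E j *ᵥ c l) (star (E j *ᵥ c l)))
      = ((q : ℂ) * ((q : ℂ) + 1)) •
        ((1 : Matrix (Fin (q * (q + 1))) (Fin (q * (q + 1))) ℂ) -
          ((q : ℂ) + 1)⁻¹ •
            vecMulVec (fun i : Fin (q * (q + 1)) => if q ^ 2 - 1 ≤ (i : ℕ) then 1 else 0)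
              (fun i : Fin (q * (q + 1)) => if q ^ 2 - 1 ≤ (i : ℕ) then 1 else 0))) := by
  obtain ⟨N, rfl, hN01, hrow, hgram⟩ := exists_natCast_incidence hZ01 hZrow hZgram
  have hcol : ∀ j, E j *ᵥ 1 = fun i => (N i j : ℂ) := fun j => funext (hEcol j)
  have hshare : ∀ j j', j ≠ j' → star (E j *ᵥ 1) ⬝ᵥ (E j' *ᵥ 1) = 1 := fun j j' h => by
    simpa [hcol, dotProduct] using congrArg (Nat.cast : ℕ → ℂ) ((hgram j j').trans (if_neg h))
  have hnorm : ∀ j (x : Fin (q + 1) → ℂ), (∀ l, ‖x l‖ = 1) →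
      star (E j *ᵥ x) ⬝ᵥ (E j *ᵥ x) = q + 1 := fun j x hx => by
    rw [star_mulVec_dotProduct_mulVec_self (hE01 j) (hEiso j),
      star_dotProduct_self_of_unimodular hx]
    simp
  have hlohi : (⟨q - 1, Nat.sub_lt_succ q 1⟩ : Fin (q + 1)) ≠ ⟨q, Nat.lt_succ_self q⟩ := by
    simp only [ne_eq, Fin.ext_iff]
    omega
  have hS := frameOperator_eq_smul_one_of_simplex hs_unimod hs_ang (by simp)
  have hC := frameOperator_eq_of_cosimplex hc_unimod hc_ang hlohi hc_sum (by simp)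
  simp only [Fintype.card_fin, Nat.cast_add, Nat.cast_ofNat] at hS hC
  refine ⟨finrank_ker_sum_bottom_proj (by omega), ?_, ?_, fun j l _ => hnorm j _ (hs_unimod l),
    fun j l _ => hnorm j _ (hc_unimod l), ?_, ?_, ?_,
    sum_frameOperator_hyperoval (by omega) hN01 hrow hgram
      (fun i j hj hi => by simpa using hZblock i j hj hi) hE01 hEiso hcol hEblock hS hC⟩
  · intro j hj l
    exact sum_eq_zero fun i hi => mulVec_eq_zero_of_mulVec_one_eq_zero (hE01 j i)
      ((hEcol j i).trans (hZblock i j hj (mem_filter.1 hi).2)) _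
  · intro j hj l
    rw [sum_bottom_mulVec_of_block (hE01 j) (hEiso j) (by omega) (hEblock j hj), hc_sum]
  · intro j j' l l' _ _ hne
    exact norm_star_mulVec_dotProduct_mulVec_eq_one_of_family hE01 hEiso hshare
      (hs_unimod l) (hs_unimod l') (by rintro rfl; exact hs_ang l l' fun h => hne (by rw [h]))
  · intro j j' l l' hj hj'
    exact norm_star_mulVec_dotProduct_mulVec_eq_one_of_family hE01 hEiso hshare
      (hs_unimod l) (hc_unimod l') (by rintro rfl; omega)
  · intro j j' l l' _ _ hne
    exact norm_star_mulVec_dotProduct_mulVec_eq_one_of_family hE01 hEiso hshare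
      (hc_unimod l) (hc_unimod l') (by rintro rfl; exact hc_ang l l' fun h => hne (by rw [h]))
end

section
/- Let m ≠ n be positive integers and let Φ be an m×n complex matrix with |Φ(i,j)| = 1 for all entries. Let d be the rank of Φ, and suppose: (a) ΦΦ*Φ = (mn/d)·Φ (the columns form a tight frame for their span); (b) there is w₁ ≥ 0 with |(Φ*Φ)(j, j′)| = w₁ for all j ≠ j′ (equiangular columns); (c) there is w₂ ≥ 0 with |(ΦΦ*)(i, i′)| = w₂ for all i ≠ i′ (equiangular rows); and (d) (1/n)·√((n − d)/(d(n − 1))) = (1/m)·√((m − d)/(d(m − 1))). Then for either choice of sign ±, setting g = √(m+n) and f = −√(m+n−1) / ( √(m+n)·√(m+n−1) ± √(mn) ), the m×(n+m) block matrix Ψ = [ Φ , f·ΦΦ* + g·I ] satisfies: ΨΨ* = (m+n)·I; every column of Ψ has squared norm m; and all off-diagonal entries of Ψ*Ψ have the same modulus, namely √(mn/(m+n−1)). Hence the n+m columns of Ψ form an equiangular tight frame for ℂ^m. -/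
/-!
Put `G = ΦΦ*`, `H = Φ*Φ` and `a = mn/d`. Tightness gives `G² = aG` and `H² = aH`, and flatness
makes the diagonals of `G` and `H` constant (`n` and `m`). Computing `tr G² = a tr G` entrywise
gives `(m-1)w₂² = n(a-n)`, and likewise `(n-1)w₁² = m(a-m)`. These identities turn the two
Welch terms into `w₁/(mn)` and `w₂/(mn)`, so `w₁ = w₂ =: w`; subtracting them, `w² = m+n-a` and
`(m+n-1)w² = mn`.

With `B = fG + gI`, `ΨΨ* = G + B²` and `Ψ*Ψ = [[H, (fa+g)Φ*], [(fa+g)Φ, B²]]`, while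
`B² = (f²a + 2fg)G + g²I`. The stated `f` and `g` are the solutions of `f²a + 2fg = -1`,
`g² = m+n`, and for them `|fa+g| = w`.
-/

open Matrix

namespace Matrix

variable {ι κ : Type*} [Fintype ι] [Fintype κ]

lemma trace_mul_conjTranspose_self_eq_sum (A : Matrix ι κ ℂ) :
    (A * Aᴴ).trace = ((∑ i, ∑ j, ‖A i j‖ ^ 2 : ℝ) : ℂ) := by
  simp [trace, mul_apply, Complex.mul_conj']

omit [Fintype ι] in
lemma mul_conjTranspose_self_apply_self_of_flat {Φ : Matrix ι κ ℂ} (hflat : ∀ i j, ‖Φ i j‖ = 1)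
    (i : ι) : (Φ * Φᴴ) i i = Fintype.card κ := by
  simp [mul_apply, Complex.mul_conj', hflat]

lemma sum_norm_sq_of_equiangular [DecidableEq ι] {A : Matrix ι ι ℂ} {c w : ℝ}
    (hdiag : ∀ i, ‖A i i‖ = c) (hoff : ∀ i i', i ≠ i' → ‖A i i'‖ = w) :
    ∑ i, ∑ i', ‖A i i'‖ ^ 2 = Fintype.card ι * (c ^ 2 + (Fintype.card ι - 1) * w ^ 2) := by
  have hrow (i : ι) : ∑ i', ‖A i i'‖ ^ 2 = c ^ 2 + (Fintype.card ι - 1) * w ^ 2 := by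
    rw [Fintype.sum_eq_add_sum_compl i, hdiag,
      Finset.sum_congr rfl fun i' hi' => by rw [hoff i i' (by simpa [eq_comm] using hi')]]
    simp [Finset.card_compl, Nat.cast_sub (Fintype.card_pos_iff.mpr ⟨i⟩)]
  simp only [hrow, Finset.sum_const, Finset.card_univ, nsmul_eq_mul]

section tight

variable {Φ : Matrix ι κ ℂ} {a : ℝ}

lemma conjTranspose_mul_mul_of_tight (ha : Φ * Φᴴ * Φ = (a : ℂ) • Φ) :
    Φᴴ * Φ * Φᴴ = (a : ℂ) • Φᴴ := by
  simpa [Matrix.mul_assoc] using congrArg conjTranspose ha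

lemma gram_mul_self_of_tight (ha : Φ * Φᴴ * Φ = (a : ℂ) • Φ) :
    Φ * Φᴴ * (Φ * Φᴴ) = (a : ℂ) • (Φ * Φᴴ) := by
  rw [← Matrix.mul_assoc, ha, smul_mul]

lemma coherence_rows_of_tight_flat [DecidableEq ι] [Nonempty ι] {w : ℝ}
    (hflat : ∀ i j, ‖Φ i j‖ = 1) (ha : Φ * Φᴴ * Φ = (a : ℂ) • Φ)
    (hrows : ∀ i i', i ≠ i' → ‖(Φ * Φᴴ) i i'‖ = w) :
    ((Fintype.card ι : ℝ) - 1) * w ^ 2 = Fintype.card κ * (a - Fintype.card κ) := by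
  have hdiag (i : ι) : ‖(Φ * Φᴴ) i i‖ = Fintype.card κ := by
    simp [mul_conjTranspose_self_apply_self_of_flat hflat]
  have htrace := trace_mul_conjTranspose_self_eq_sum (Φ * Φᴴ)
  rw [sum_norm_sq_of_equiangular hdiag hrows, conjTranspose_mul, conjTranspose_conjTranspose,
    gram_mul_self_of_tight ha, trace_smul, trace_mul_conjTranspose_self_eq_sum] at htrace
  simp only [hflat, one_pow, Finset.sum_const, Finset.card_univ, nsmul_eq_mul, mul_one,
    smul_eq_mul] at htrace
  have hι : (0 : ℝ) < Fintype.card ι := by exact_mod_cast Fintype.card_pos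
  apply mul_left_cancel₀ hι.ne'
  rw [← Complex.ofReal_mul, Complex.ofReal_inj] at htrace
  linear_combination -htrace

lemma coherence_cols_of_tight_flat [DecidableEq κ] [Nonempty κ] {w : ℝ}
    (hflat : ∀ i j, ‖Φ i j‖ = 1) (ha : Φ * Φᴴ * Φ = (a : ℂ) • Φ)
    (hcols : ∀ j j', j ≠ j' → ‖(Φᴴ * Φ) j j'‖ = w) :
    ((Fintype.card κ : ℝ) - 1) * w ^ 2 = Fintype.card ι * (a - Fintype.card ι) :=
  coherence_rows_of_tight_flat (Φ := Φᴴ) (fun j i => by rw [conjTranspose_apply, norm_star, hflat])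
    (by simpa only [conjTranspose_conjTranspose] using conjTranspose_mul_mul_of_tight ha)
    (by simpa only [conjTranspose_conjTranspose] using hcols)

end tight

variable [DecidableEq ι]

def gramExtension (Φ : Matrix ι κ ℂ) (f g : ℝ) : Matrix ι (κ ⊕ ι) ℂ :=
  fromCols Φ ((f : ℂ) • (Φ * Φᴴ) + (g : ℂ) • 1)

section gramExtension

variable {Φ : Matrix ι κ ℂ} {a f g : ℝ}

omit [Fintype ι] in
lemma gram_add_one_conjTranspose :
    ((f : ℂ) • (Φ * Φᴴ) + (g : ℂ) • 1)ᴴ = (f : ℂ) • (Φ * Φᴴ) + (g : ℂ) • (1 : Matrix ι ι ℂ) := by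
  simp [conjTranspose_mul]

lemma gram_add_one_mul_self (ha : Φ * Φᴴ * Φ = (a : ℂ) • Φ) (hfg : 1 + 2 * f * g + f ^ 2 * a = 0) :
    ((f : ℂ) • (Φ * Φᴴ) + (g : ℂ) • 1) * ((f : ℂ) • (Φ * Φᴴ) + (g : ℂ) • 1)
      = ((g ^ 2 : ℝ) : ℂ) • 1 - Φ * Φᴴ := by
  have hfg' : (f : ℂ) ^ 2 * a + 2 * f * g = -1 := by
    exact_mod_cast (by linarith : f ^ 2 * a + 2 * f * g = -1)
  simp only [add_mul, mul_add, Matrix.smul_mul, Matrix.mul_smul, Matrix.one_mul, Matrix.mul_one,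
    gram_mul_self_of_tight ha, smul_smul]
  push_cast
  linear_combination (norm := module) hfg' • (Φ * Φᴴ : Matrix ι ι ℂ)

lemma conjTranspose_mul_gram_add_one (ha : Φ * Φᴴ * Φ = (a : ℂ) • Φ) :
    Φᴴ * ((f : ℂ) • (Φ * Φᴴ) + (g : ℂ) • 1) = ((f * a + g : ℝ) : ℂ) • Φᴴ := by
  rw [Matrix.mul_add, Matrix.mul_smul, Matrix.mul_smul, ← Matrix.mul_assoc,
    conjTranspose_mul_mul_of_tight ha, Matrix.mul_one]
  push_cast
  module

lemma gram_add_one_mul (ha : Φ * Φᴴ * Φ = (a : ℂ) • Φ) :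
    ((f : ℂ) • (Φ * Φᴴ) + (g : ℂ) • 1) * Φ = ((f * a + g : ℝ) : ℂ) • Φ := by
  rw [Matrix.add_mul, Matrix.smul_mul, Matrix.smul_mul, Matrix.one_mul, ha]
  push_cast
  module

lemma gramExtension_mul_conjTranspose (ha : Φ * Φᴴ * Φ = (a : ℂ) • Φ)
    (hfg : 1 + 2 * f * g + f ^ 2 * a = 0) :
    gramExtension Φ f g * (gramExtension Φ f g)ᴴ = ((g ^ 2 : ℝ) : ℂ) • 1 := by
  rw [gramExtension, conjTranspose_fromCols_eq_fromRows_conjTranspose, fromCols_mul_fromRows,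
    gram_add_one_conjTranspose, gram_add_one_mul_self ha hfg, add_sub_cancel]

lemma conjTranspose_gramExtension_mul (ha : Φ * Φᴴ * Φ = (a : ℂ) • Φ)
    (hfg : 1 + 2 * f * g + f ^ 2 * a = 0) :
    (gramExtension Φ f g)ᴴ * gramExtension Φ f g =
      fromBlocks (Φᴴ * Φ) (((f * a + g : ℝ) : ℂ) • Φᴴ) (((f * a + g : ℝ) : ℂ) • Φ)
        (((g ^ 2 : ℝ) : ℂ) • 1 - Φ * Φᴴ) := by
  rw [gramExtension, conjTranspose_fromCols_eq_fromRows_conjTranspose, fromRows_mul_fromCols,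
    gram_add_one_conjTranspose, conjTranspose_mul_gram_add_one ha, gram_add_one_mul ha,
    gram_add_one_mul_self ha hfg]

lemma conjTranspose_gramExtension_mul_apply_self (hflat : ∀ i j, ‖Φ i j‖ = 1)
    (ha : Φ * Φᴴ * Φ = (a : ℂ) • Φ) (hfg : 1 + 2 * f * g + f ^ 2 * a = 0)
    (hg : g ^ 2 = Fintype.card ι + Fintype.card κ) (c : κ ⊕ ι) :
    ((gramExtension Φ f g)ᴴ * gramExtension Φ f g) c c = Fintype.card ι := by
  rw [conjTranspose_gramExtension_mul ha hfg]
  rcases c with j | i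
  · simpa using mul_conjTranspose_self_apply_self_of_flat (Φ := Φᴴ) (fun j i => by simp [hflat]) j
  · simp [mul_conjTranspose_self_apply_self_of_flat hflat, hg]

lemma norm_conjTranspose_gramExtension_mul_apply_of_ne {w : ℝ} (hflat : ∀ i j, ‖Φ i j‖ = 1)
    (ha : Φ * Φᴴ * Φ = (a : ℂ) • Φ) (hfg : 1 + 2 * f * g + f ^ 2 * a = 0)
    (hcoeff : |f * a + g| = w)
    (hcols : ∀ j j', j ≠ j' → ‖(Φᴴ * Φ) j j'‖ = w)
    (hrows : ∀ i i', i ≠ i' → ‖(Φ * Φᴴ) i i'‖ = w) {c c' : κ ⊕ ι} (hcc' : c ≠ c') :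
    ‖((gramExtension Φ f g)ᴴ * gramExtension Φ f g) c c'‖ = w := by
  rw [conjTranspose_gramExtension_mul ha hfg]
  rcases c with j | i <;> rcases c' with j' | i'
  · exact hcols j j' fun h => hcc' (h ▸ rfl)
  · rw [← hcoeff, ← Real.norm_eq_abs, ← Complex.norm_real]
    simp [hflat]
  · rw [← hcoeff, ← Real.norm_eq_abs, ← Complex.norm_real]
    simp [hflat]
  · have hii' : i ≠ i' := fun h => hcc' (h ▸ rfl)
    simp [one_apply_ne hii', hrows i i' hii']

end gramExtension

end Matrix

lemma ne_one_of_welch_eq {m n d a w : ℝ} (hm : 0 < m) (hmn : m ≠ n) (ha : a = m * n / d)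
    (hcols : (n - 1) * w ^ 2 = m * (a - m))
    (hwelch : 1 / n * √((n - d) / (d * (n - 1))) = 1 / m * √((m - d) / (d * (m - 1)))) :
    n ≠ 1 := by
  -- for `n = 1` the left side is `√(x / 0) = 0`, while `d = 1` makes the right side `1 / m`
  subst ha
  rintro rfl
  have hd : d = 1 := by
    rcases eq_or_ne d 0 with rfl | hd
    · nlinarith [div_zero (m * 1)]
    · field_simp at hcols
      have : m ^ 2 * (1 - d) = 0 := by linarith
      have : 1 - d = 0 := by simpa [hm.ne'] using this
      linarith
  have hm1 : m - 1 ≠ 0 := sub_ne_zero.mpr hmn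
  simp [hd, hm1, hm.ne'.symm] at hwelch

lemma welch_eq_of_coherence {m n d a w : ℝ} (hm : 0 < m) (hn : 1 < n) (hw : 0 ≤ w)
    (ha : a = m * n / d) (hcols : (n - 1) * w ^ 2 = m * (a - m)) :
    1 / n * √((n - d) / (d * (n - 1))) = w / (m * n) := by
  subst ha
  have hd : d ≠ 0 := by
    rintro rfl
    nlinarith [div_zero (m * n)]
  have hn1 : n - 1 ≠ 0 := by linarith
  have hsq : (n - d) / (d * (n - 1)) = (w / m) ^ 2 := by
    field_simp at hcols ⊢
    linear_combination -hcols
  rw [hsq, Real.sqrt_sq (by positivity)]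
  field_simp

lemma sq_eq_of_coherence {m n a w : ℝ} (hmn : m ≠ n)
    (hcols : (n - 1) * w ^ 2 = m * (a - m)) (hrows : (m - 1) * w ^ 2 = n * (a - n)) :
    w ^ 2 = m + n - a ∧ (m + n - 1) * w ^ 2 = m * n := by
  have hw : w ^ 2 = m + n - a := by
    apply mul_left_cancel₀ (sub_ne_zero.mpr hmn)
    linear_combination hrows - hcols
  exact ⟨hw, by linear_combination hcols + m * hw⟩

lemma extension_coeffs_of_sq_relation {S T P ε a f : ℝ} (hε : ε = 1 ∨ ε = -1) (hS : 0 ≤ S)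
    (hT : 0 < T) (hP : 0 ≤ P) (ha : 0 < a) (hSTP : T ^ 2 * (S ^ 2 - a) = P ^ 2)
    (hf : f = -T / (S * T + ε * P)) :
    1 + 2 * f * S + f ^ 2 * a = 0 ∧ f * a + S = ε * P / T := by
  have hε2 : ε ^ 2 = 1 := by rcases hε with rfl | rfl <;> norm_num
  have hPST : P < S * T := by
    have : P ^ 2 < (S * T) ^ 2 := by nlinarith [mul_pos (pow_pos hT 2) ha]
    exact lt_of_pow_lt_pow_left₀ 2 (by positivity) this
  have hD : S * T + ε * P ≠ 0 := by rcases hε with rfl | rfl <;> nlinarith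
  have hfD : f * (S * T + ε * P) = -T := by rw [hf, div_mul_cancel₀ _ hD]
  constructor
  · apply mul_left_cancel₀ (pow_ne_zero 2 hD)
    linear_combination (2 * S * (S * T + ε * P) + a * (f * (S * T + ε * P) - T)) * hfD - hSTP
      + P ^ 2 * hε2
  · rw [eq_div_iff hT.ne']
    apply mul_left_cancel₀ hD
    linear_combination a * T * hfD + hSTP - P ^ 2 * hε2

lemma coherence_eq_of_welch_eq {m n d a w₁ w₂ : ℝ} (hm : 1 ≤ m) (hn : 1 ≤ n) (hmn : m ≠ n)
    (hw₁ : 0 ≤ w₁) (hw₂ : 0 ≤ w₂) (ha : a = m * n / d)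
    (hcols : (n - 1) * w₁ ^ 2 = m * (a - m)) (hrows : (m - 1) * w₂ ^ 2 = n * (a - n))
    (hwelch : 1 / n * √((n - d) / (d * (n - 1))) = 1 / m * √((m - d) / (d * (m - 1)))) :
    w₁ = √(m * n / (m + n - 1)) ∧ w₂ = √(m * n / (m + n - 1)) ∧
      (m + n - 1) * (m + n - a) = m * n := by
  have ha' : a = n * m / d := by rw [ha, mul_comm]
  have hn1 : 1 < n := lt_of_le_of_ne hn (ne_one_of_welch_eq (by linarith) hmn ha hcols hwelch).symm
  have hm1 : 1 < m :=
    lt_of_le_of_ne hm (ne_one_of_welch_eq (by linarith) hmn.symm ha' hrows hwelch.symm).symm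
  have hw : w₁ = w₂ := by
    rw [welch_eq_of_coherence (by linarith) hn1 hw₁ ha hcols,
      welch_eq_of_coherence (by linarith) hm1 hw₂ ha' hrows, mul_comm n] at hwelch
    exact (div_left_inj' (by positivity)).mp hwelch
  subst hw
  obtain ⟨hwa, hwmn⟩ := sq_eq_of_coherence hmn hcols hrows
  have hw : w₁ = √(m * n / (m + n - 1)) := by
    rw [← Real.sqrt_sq hw₁, ← hwmn, mul_div_cancel_left₀ _ (by linarith)]
  exact ⟨hw, hw, by rw [← hwa, hwmn]⟩

lemma extension_coeffs {m n a ε f : ℝ} (hm : 1 ≤ m) (hn : 1 ≤ n) (hε : ε = 1 ∨ ε = -1)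
    (hmna : (m + n - 1) * (m + n - a) = m * n)
    (hf : f = -√(m + n - 1) / (√(m + n) * √(m + n - 1) + ε * √(m * n))) :
    1 + 2 * f * √(m + n) + f ^ 2 * a = 0 ∧
      |f * a + √(m + n)| = √(m * n / (m + n - 1)) := by
  have hmn1 : 0 < m + n - 1 := by linarith
  have ha : 0 < a := by nlinarith
  have hSTP : √(m + n - 1) ^ 2 * (√(m + n) ^ 2 - a) = √(m * n) ^ 2 := by
    rw [Real.sq_sqrt hmn1.le, Real.sq_sqrt (by linarith), Real.sq_sqrt (by positivity), hmna]
  obtain ⟨hfg, hcoeff⟩ := extension_coeffs_of_sq_relation hε (Real.sqrt_nonneg _)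
    (Real.sqrt_pos.2 hmn1) (Real.sqrt_nonneg _) ha hSTP hf
  refine ⟨hfg, ?_⟩
  rw [hcoeff, Real.sqrt_div' _ hmn1.le, abs_div, abs_mul, abs_of_pos (Real.sqrt_pos.2 hmn1),
    abs_of_nonneg (Real.sqrt_nonneg _)]
  rcases hε with rfl | rfl <;> simp

open Matrix in
theorem extend_flat_etf_general (m n : ℕ) (hm : 0 < m) (hn : 0 < n) (hmn : m ≠ n)
    (Φ : Matrix (Fin m) (Fin n) ℂ)
    (hflat : ∀ i j, ‖Φ i j‖ = 1)
    (d : ℕ)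
    (ha : Φ * Φᴴ * Φ = (((m : ℂ) * (n : ℂ)) / (d : ℂ)) • Φ)
    (w₁ : ℝ) (hw₁ : 0 ≤ w₁)
    (hcols : ∀ j j' : Fin n, j ≠ j' → ‖(Φᴴ * Φ) j j'‖ = w₁)
    (w₂ : ℝ) (hw₂ : 0 ≤ w₂)
    (hrows : ∀ i i' : Fin m, i ≠ i' → ‖(Φ * Φᴴ) i i'‖ = w₂)
    (hwelch : (1 / (n : ℝ)) * Real.sqrt (((n : ℝ) - d) / (d * ((n : ℝ) - 1)))
      = (1 / (m : ℝ)) * Real.sqrt (((m : ℝ) - d) / (d * ((m : ℝ) - 1))))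
    (ε : ℝ) (hε : ε = 1 ∨ ε = -1) :
    let g : ℝ := Real.sqrt ((m : ℝ) + (n : ℝ))
    let f : ℝ := -Real.sqrt ((m : ℝ) + (n : ℝ) - 1) /
      (Real.sqrt ((m : ℝ) + (n : ℝ)) * Real.sqrt ((m : ℝ) + (n : ℝ) - 1)
        + ε * Real.sqrt ((m : ℝ) * (n : ℝ)))
    let Ψ : Matrix (Fin m) (Fin n ⊕ Fin m) ℂ :=
      Matrix.fromCols Φ ((f : ℂ) • (Φ * Φᴴ) + (g : ℂ) • 1)
    (Ψ * Ψᴴ = ((m : ℂ) + (n : ℂ)) • 1) ∧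
    (∀ c, (Ψᴴ * Ψ) c c = (m : ℂ)) ∧
    (∀ c c', c ≠ c' → ‖(Ψᴴ * Ψ) c c'‖
      = Real.sqrt ((m : ℝ) * (n : ℝ) / ((m : ℝ) + (n : ℝ) - 1))) := by
  intro g f Ψ
  have := NeZero.of_pos hm
  have := NeZero.of_pos hn
  set a : ℝ := m * n / d
  have hΦ : Φ * Φᴴ * Φ = (a : ℂ) • Φ := by simp only [a]; push_cast; exact ha
  have hm1 : (1 : ℝ) ≤ m := by exact_mod_cast hm
  have hn1 : (1 : ℝ) ≤ n := by exact_mod_cast hn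
  obtain ⟨hw₁, hw₂, hmna⟩ := coherence_eq_of_welch_eq hm1 hn1 (by exact_mod_cast hmn) hw₁ hw₂ rfl
    (by simpa only [Fintype.card_fin] using coherence_cols_of_tight_flat hflat hΦ hcols)
    (by simpa only [Fintype.card_fin] using coherence_rows_of_tight_flat hflat hΦ hrows) hwelch
  obtain ⟨hfg, habs⟩ := extension_coeffs hm1 hn1 hε hmna rfl
  have hg : g ^ 2 = m + n := Real.sq_sqrt (by positivity)
  rw [show Ψ = gramExtension Φ f g from rfl]
  refine ⟨?_, fun c => ?_, fun c c' hcc' => ?_⟩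
  · rw [gramExtension_mul_conjTranspose hΦ hfg, hg]
    push_cast
    rfl
  · rw [conjTranspose_gramExtension_mul_apply_self hflat hΦ hfg
      (by rw [Fintype.card_fin, Fintype.card_fin, hg]) c, Fintype.card_fin]
  · exact norm_conjTranspose_gramExtension_mul_apply_of_ne hflat hΦ hfg habs (hw₁ ▸ hcols)
      (hw₂ ▸ hrows) hcc'

open Matrix in
/-- Extending a flat "doubly equiangular" tight frame to a larger ETF: if `Φ` is a
non-square unimodular `m × n` matrix of rank `d` whose columns form a tight frame for
their span, whose columns and rows are both equiangular, and whose column and row Welch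
bounds match, then for either choice of sign, with
`g = √(m+n)` and `f = −√(m+n−1)/(√(m+n)√(m+n−1) ± √(mn))`, the block matrix
`Ψ = [Φ, fΦΦ* + gI]` satisfies `ΨΨ* = (m+n)I`, has columns of squared norm `m`, and all
off-diagonal entries of `Ψ*Ψ` have modulus `√(mn/(m+n−1))`: its `n + m` columns form an
equiangular tight frame for `ℂ^m`. -/
theorem extend_flat_etf (m n : ℕ) (hm : 0 < m) (hn : 0 < n) (hmn : m ≠ n)
    (Φ : Matrix (Fin m) (Fin n) ℂ)
    (hflat : ∀ i j, ‖Φ i j‖ = 1)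
    (d : ℕ) (hd : d = Φ.rank)
    (ha : Φ * Φᴴ * Φ = (((m : ℂ) * (n : ℂ)) / (d : ℂ)) • Φ)
    (w₁ : ℝ) (hw₁ : 0 ≤ w₁)
    (hcols : ∀ j j' : Fin n, j ≠ j' → ‖(Φᴴ * Φ) j j'‖ = w₁)
    (w₂ : ℝ) (hw₂ : 0 ≤ w₂)
    (hrows : ∀ i i' : Fin m, i ≠ i' → ‖(Φ * Φᴴ) i i'‖ = w₂)
    (hwelch : (1 / (n : ℝ)) * Real.sqrt (((n : ℝ) - d) / (d * ((n : ℝ) - 1)))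
      = (1 / (m : ℝ)) * Real.sqrt (((m : ℝ) - d) / (d * ((m : ℝ) - 1))))
    (ε : ℝ) (hε : ε = 1 ∨ ε = -1) :
    let g : ℝ := Real.sqrt ((m : ℝ) + (n : ℝ))
    let f : ℝ := -Real.sqrt ((m : ℝ) + (n : ℝ) - 1) /
      (Real.sqrt ((m : ℝ) + (n : ℝ)) * Real.sqrt ((m : ℝ) + (n : ℝ) - 1)
        + ε * Real.sqrt ((m : ℝ) * (n : ℝ)))
    let Ψ : Matrix (Fin m) (Fin n ⊕ Fin m) ℂ :=
      Matrix.fromCols Φ ((f : ℂ) • (Φ * Φᴴ) + (g : ℂ) • 1)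
    (Ψ * Ψᴴ = ((m : ℂ) + (n : ℂ)) • 1) ∧
    (∀ c, (Ψᴴ * Ψ) c c = (m : ℂ)) ∧
    (∀ c c', c ≠ c' → ‖(Ψᴴ * Ψ) c c'‖
      = Real.sqrt ((m : ℝ) * (n : ℝ) / ((m : ℝ) + (n : ℝ) - 1))) :=
  extend_flat_etf_general m n hm hn hmn Φ hflat d ha w₁ hw₁ hcols w₂ hw₂ hrows hwelch ε hε
end

section
/- Let q ≥ 2 be an even integer, m = q(q+1) and n = q(q² + q − 1). Suppose there exists an m×n real matrix Φ all of whose entries lie in {+1, −1}, such that every column of Φ is orthogonal to the all-ones vector 1 ∈ ℝ^m, |⟨φ_i, φ_j⟩| = q for all distinct columns φ_i, φ_j, and ΦΦᵀ = q²(q+1)·(I − (1/m)·J). Then there exist q²(q+2) vectors ψ_1, …, ψ_{q²(q+2)} in ℝ^{q(q+1)}, all of the same positive norm, whose pairwise inner products all have the same absolute value, and whose rank-one outer products sum to a positive multiple of the identity; that is, there exists a real equiangular tight frame of q²(q+2) vectors for ℝ^{q(q+1)}. -/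
/-!
Append to `Φ` the `m` columns of `M = q I + β J`, where `β` is chosen so that `MᵀM = q² I + q J`.
All columns then have squared norm `q(q+1)`. Since the columns of `Φ` lie in `1^⊥`, `ΦᵀM = q Φᵀ`
has entries `±q`, so every off-diagonal Gram entry of `[Φ M]` has absolute value `q`; and
`ΦΦᵀ + MMᵀ = q²(q+1)(I − J/m) + q² I + q J = q²(q+2) I` because `m = q(q+1)`.
-/

open Matrix

def IsEquiangularTightFrame {m n : Type*} [Fintype m] [Fintype n] [DecidableEq m]
    (Ψ : Matrix m n ℝ) : Prop :=
  (∃ r : ℝ, 0 < r ∧ ∀ j, (Ψᵀ * Ψ) j j = r) ∧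
    (∃ w : ℝ, ∀ j j', j ≠ j' → |(Ψᵀ * Ψ) j j'| = w) ∧
    (∃ a : ℝ, 0 < a ∧ Ψ * Ψᵀ = a • 1)

theorem IsEquiangularTightFrame.submatrix_id {m n n' : Type*} [Fintype m] [Fintype n]
    [Fintype n'] [DecidableEq m] {Ψ : Matrix m n ℝ} (hΨ : IsEquiangularTightFrame Ψ)
    (e : n' ≃ n) : IsEquiangularTightFrame (Ψ.submatrix id e) := by
  obtain ⟨⟨r, hr, hdiag⟩, ⟨w, hoff⟩, ⟨a, ha, htight⟩⟩ := hΨ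
  have hgram : (Ψ.submatrix id e)ᵀ * Ψ.submatrix id e = (Ψᵀ * Ψ).submatrix e e := by
    rw [transpose_submatrix, submatrix_mul _ _ _ id _ Function.bijective_id]
  refine ⟨⟨r, hr, fun j => ?_⟩, ⟨w, fun j j' hne => ?_⟩, ⟨a, ha, ?_⟩⟩
  · rw [hgram, submatrix_apply, hdiag]
  · rw [hgram, submatrix_apply, hoff _ _ (e.injective.ne hne)]
  · rw [transpose_submatrix, submatrix_mul_equiv, submatrix_id_id, htight]

namespace Matrix

variable {l m n R : Type*} [Fintype m]

theorem ones_mul_ones [NonAssocSemiring R] :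
    (of fun _ _ => 1 : Matrix l m R) * (of fun _ _ => 1 : Matrix m n R) =
      (Fintype.card m : R) • of fun _ _ => 1 := by
  ext; simp [mul_apply]

theorem transpose_mul_ones_eq_zero [NonAssocSemiring R] {Φ : Matrix m n R}
    (h : ∀ j, ∑ i, Φ i j = 0) : Φᵀ * (of fun _ _ => 1 : Matrix m l R) = 0 := by
  ext; simp [mul_apply, h]

theorem smul_one_add_smul_ones_mul_self [DecidableEq m] [CommRing R] (c β : R) :
    (c • 1 + β • of fun _ _ => 1 : Matrix m m R) * (c • 1 + β • of fun _ _ => 1) =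
      c ^ 2 • 1 + (2 * c * β + Fintype.card m * β ^ 2) • of fun _ _ => 1 := by
  simp only [Matrix.add_mul, Matrix.mul_add, Matrix.smul_mul, Matrix.mul_smul, Matrix.one_mul,
    Matrix.mul_one, ones_mul_ones, smul_smul]
  module

theorem transpose_mul_self_apply_self_of_sign [Ring R] {Φ : Matrix m n R}
    (h : ∀ i j, Φ i j = 1 ∨ Φ i j = -1) (j : n) : (Φᵀ * Φ) j j = Fintype.card m := by
  have hsq : ∀ i, Φ i j * Φ i j = 1 := fun i => by rcases h i j with h | h <;> simp [h]
  simp [mul_apply, hsq]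

end Matrix

section Completion

variable {m n : Type*} [DecidableEq m]

variable (m) in
/-- `β = (√(q+2) − 1)/(q+1)` is the positive root of `(q+1)β² + 2β = 1`, which makes the Gram
matrix `q² I + q J` when `m` has `q(q+1)` elements. -/
noncomputable def etfCompletion (q : ℝ) : Matrix m m ℝ :=
  q • 1 + ((√(q + 2) - 1) / (q + 1)) • of fun _ _ => 1

theorem etfCompletion_transpose (q : ℝ) : (etfCompletion m q)ᵀ = etfCompletion m q := by
  simp only [etfCompletion, transpose_add, transpose_smul, transpose_one]
  rfl

variable [Fintype m] {q : ℝ}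

theorem etfCompletion_mul_self (hq : 0 < q) (hm : (Fintype.card m : ℝ) = q * (q + 1)) :
    etfCompletion m q * etfCompletion m q = q ^ 2 • 1 + q • of fun _ _ => 1 := by
  set β := (√(q + 2) - 1) / (q + 1)
  have hβ : (q + 1) * β ^ 2 + 2 * β = 1 := by
    have hs : √(q + 2) ^ 2 = q + 2 := Real.sq_sqrt (by linarith)
    simp only [β]
    field_simp
    linear_combination hs
  have hcoeff : 2 * q * β + q * (q + 1) * β ^ 2 = q := by linear_combination q * hβ
  rw [etfCompletion, smul_one_add_smul_ones_mul_self, hm, hcoeff]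

theorem transpose_mul_etfCompletion {Φ : Matrix m n ℝ} (h : ∀ j, ∑ i, Φ i j = 0) (q : ℝ) :
    Φᵀ * etfCompletion m q = q • Φᵀ := by
  rw [etfCompletion, Matrix.mul_add, Matrix.mul_smul, Matrix.mul_smul,
    transpose_mul_ones_eq_zero h, Matrix.mul_one, smul_zero, add_zero]

theorem mul_transpose_add_etfCompletion_mul_transpose [Fintype n] (hq : 0 < q)
    (hm : (Fintype.card m : ℝ) = q * (q + 1)) {Φ : Matrix m n ℝ}
    (htight : Φ * Φᵀ = (q ^ 2 * (q + 1)) • (1 - (Fintype.card m : ℝ)⁻¹ • of fun _ _ => 1)) :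
    Φ * Φᵀ + etfCompletion m q * (etfCompletion m q)ᵀ = (q ^ 2 * (q + 2)) • 1 := by
  have hcoeff : q ^ 2 * (q + 1) * (q * (q + 1))⁻¹ = q := by field_simp
  rw [etfCompletion_transpose, etfCompletion_mul_self hq hm, htight, hm, smul_sub, smul_smul,
    hcoeff]
  module

theorem isEquiangularTightFrame_fromCols_etfCompletion [Fintype n] (hq : 0 < q)
    (hm : (Fintype.card m : ℝ) = q * (q + 1)) {Φ : Matrix m n ℝ}
    (hpm : ∀ i j, Φ i j = 1 ∨ Φ i j = -1) (horth : ∀ j, ∑ i, Φ i j = 0)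
    (hang : ∀ j j', j ≠ j' → |(Φᵀ * Φ) j j'| = q)
    (htight : Φ * Φᵀ = (q ^ 2 * (q + 1)) • (1 - (Fintype.card m : ℝ)⁻¹ • of fun _ _ => 1)) :
    IsEquiangularTightFrame (fromCols Φ (etfCompletion m q)) := by
  have hΦM := transpose_mul_etfCompletion horth q
  have hMΦ : (etfCompletion m q)ᵀ * Φ = q • Φ := by simpa using congrArg transpose hΦM
  have hgram : (fromCols Φ (etfCompletion m q))ᵀ * fromCols Φ (etfCompletion m q) =
      fromBlocks (Φᵀ * Φ) (q • Φᵀ) (q • Φ) (q ^ 2 • 1 + q • of fun _ _ => 1) := by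
    rw [transpose_fromCols, fromRows_mul_fromCols, hΦM, hMΦ, etfCompletion_transpose,
      etfCompletion_mul_self hq hm]
  have habs : ∀ i j, |q * Φ i j| = q := fun i j => by
    rcases hpm i j with h | h <;> simp [h, hq.le]
  refine ⟨⟨q * (q + 1), by positivity, ?_⟩, ⟨q, ?_⟩, ⟨q ^ 2 * (q + 2), by positivity, ?_⟩⟩
  · rintro (a | b)
    · rw [hgram, fromBlocks_apply₁₁, transpose_mul_self_apply_self_of_sign hpm, hm]
    · simp only [hgram, fromBlocks_apply₂₂, Matrix.add_apply, Matrix.smul_apply, one_apply_eq,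
        of_apply, smul_eq_mul]
      ring
  · rintro (a | b) (a' | b') hne
    · exact hgram ▸ hang a a' (fun h => hne (congrArg _ h))
    · simp [hgram, habs]
    · simp [hgram, habs]
    · have hbb' : b ≠ b' := fun h => hne (congrArg _ h)
      simp [hgram, one_apply_ne hbb', hq.le]
  · rw [transpose_fromCols, fromCols_mul_fromRows,
      mul_transpose_add_etfCompletion_mul_transpose hq hm htight]

end Completion

open Matrix in
theorem real_etf_from_supersaturated_general (q : ℕ) (hq : 2 ≤ q)
    (Φ : Matrix (Fin (q * (q + 1))) (Fin (q * (q ^ 2 + q - 1))) ℝ)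
    (hpm : ∀ i j, Φ i j = 1 ∨ Φ i j = -1)
    (horth : ∀ j, ∑ i, Φ i j = 0)
    (hang : ∀ j j', j ≠ j' → |(Φᵀ * Φ) j j'| = q)
    (htight : Φ * Φᵀ = ((q : ℝ) ^ 2 * ((q : ℝ) + 1)) •
      ((1 : Matrix (Fin (q * (q + 1))) (Fin (q * (q + 1))) ℝ) -
        ((q * (q + 1) : ℕ) : ℝ)⁻¹ • Matrix.of fun _ _ => 1)) :
    ∃ Ψ : Matrix (Fin (q * (q + 1))) (Fin (q ^ 2 * (q + 2))) ℝ,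
      (∃ r : ℝ, 0 < r ∧ ∀ j, (Ψᵀ * Ψ) j j = r) ∧
      (∃ w : ℝ, ∀ j j', j ≠ j' → |(Ψᵀ * Ψ) j j'| = w) ∧
      (∃ a : ℝ, 0 < a ∧ Ψ * Ψᵀ = a • 1) := by
  have hcard : (Fintype.card (Fin (q * (q + 1))) : ℝ) = q * (q + 1) := by simp
  have hframe := isEquiangularTightFrame_fromCols_etfCompletion (by positivity) hcard hpm horth
    hang (by rwa [Fintype.card_fin])
  have hsize : q * (q ^ 2 + q - 1) + q * (q + 1) = q ^ 2 * (q + 2) := by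
    have : 1 ≤ q ^ 2 + q := by nlinarith
    zify [this]
    ring
  exact ⟨_, hframe.submatrix_id (finSumFinEquiv.trans (finCongr hsize)).symm⟩

open Matrix in
/-- If for an even `q ≥ 2` there is a `{±1}`-valued `q(q+1) × q(q²+q−1)` matrix whose
columns form an ETF for `1^⊥` with `|⟨φᵢ, φⱼ⟩| = q` (a solution to the supersaturated
design problem), then there is a real equiangular tight frame of `q²(q+2)` vectors for
`ℝ^{q(q+1)}`: equal-norm vectors with constant pairwise `|⟨·,·⟩|` whose rank-one outer
products sum to a positive multiple of the identity. -/
theorem real_etf_from_supersaturated (q : ℕ) (hq : 2 ≤ q) (hqe : Even q)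
    (Φ : Matrix (Fin (q * (q + 1))) (Fin (q * (q ^ 2 + q - 1))) ℝ)
    (hpm : ∀ i j, Φ i j = 1 ∨ Φ i j = -1)
    (horth : ∀ j, ∑ i, Φ i j = 0)
    (hang : ∀ j j', j ≠ j' → |(Φᵀ * Φ) j j'| = q)
    (htight : Φ * Φᵀ = ((q : ℝ) ^ 2 * ((q : ℝ) + 1)) •
      ((1 : Matrix (Fin (q * (q + 1))) (Fin (q * (q + 1))) ℝ) -
        ((q * (q + 1) : ℕ) : ℝ)⁻¹ • Matrix.of fun _ _ => 1)) :
    ∃ Ψ : Matrix (Fin (q * (q + 1))) (Fin (q ^ 2 * (q + 2))) ℝ,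
      (∃ r : ℝ, 0 < r ∧ ∀ j, (Ψᵀ * Ψ) j j = r) ∧
      (∃ w : ℝ, ∀ j j', j ≠ j' → |(Ψᵀ * Ψ) j j'| = w) ∧
      (∃ a : ℝ, 0 < a ∧ Ψ * Ψᵀ = a • 1) :=
  real_etf_from_supersaturated_general q hq Φ hpm horth hang htight
end
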